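/- arXiv:2106.11882 — 7 statements merged into one kernel-verified Lean document; each statement's English description precedes it below -/
import Mathlib

section
/- If a hypergraph H is q-spread and r_1-bounded, and r_1 > r_2 > ... > r_ℓ are positive integers satisfying r_{i+1} ≥ r_i / 2 for all i, then H is (4q; r_1, ..., r_ℓ)-spread. -/
open Finset

private lemma choose_le_two_pow' (n k : ℕ) : n.choose k ≤ 2 ^ n := by
  rcases le_or_gt k n with h | h
  · calc n.choose k ≤ ∑ i ∈ Finset.range (n + 1), n.choose i :=
          Finset.single_le_sum (fun i _ => Nat.zero_le _)
            (Finset.mem_range.mpr (Nat.lt_succ_of_le h))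
    _ = 2 ^ n := Nat.sum_range_choose n
  · rw [Nat.choose_eq_zero_of_lt h]; exact Nat.zero_le _

private lemma count_aux {V : Type*} [DecidableEq V] (A : Finset V) (j : ℕ)
    (H : Multiset (Finset V)) :
    (H.filter (fun S => j ≤ (A ∩ S).card)).card ≤
      ∑ B ∈ A.powersetCard j, (H.filter (fun S => B ⊆ S)).card := by
  induction H using Multiset.induction_on with
  | empty => simp
  | cons a H ih =>
    simp only [Multiset.filter_cons, Multiset.card_add]
    rw [Finset.sum_add_distrib]
    refine Nat.add_le_add ?_ ih
    by_cases h : j ≤ (A ∩ a).card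
    · simp only [h, if_pos]
      obtain ⟨B0, hB0sub, hB0card⟩ := Finset.exists_subset_card_eq h
      have hmem : B0 ∈ A.powersetCard j :=
        Finset.mem_powersetCard.mpr ⟨hB0sub.trans Finset.inter_subset_left, hB0card⟩
      have hBa : B0 ⊆ a := hB0sub.trans Finset.inter_subset_right
      calc ({a} : Multiset (Finset V)).card = 1 := rfl
        _ ≤ ((if B0 ⊆ a then ({a} : Multiset (Finset V)) else 0)).card := by
            rw [if_pos hBa]; simp
        _ ≤ ∑ B ∈ A.powersetCard j,
              ((if B ⊆ a then ({a} : Multiset (Finset V)) else 0)).card :=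
          Finset.single_le_sum
            (f := fun B => ((if B ⊆ a then ({a} : Multiset (Finset V)) else 0)).card)
            (fun i _ => Nat.zero_le _) hmem
    · simp [h]

theorem stmt2 {V : Type*} [DecidableEq V] [Fintype V]
    (H : Multiset (Finset V)) (q : ℝ) (ℓ : ℕ) (r : ℕ → ℕ)
    (hq0 : 0 < q)
    (hrpos : ∀ i, 1 ≤ i → i ≤ ℓ → 0 < r i)
    (hrdec : ∀ i, 1 ≤ i → i + 1 ≤ ℓ → r (i + 1) < r i)
    (hrhalf : ∀ i, 1 ≤ i → i + 1 ≤ ℓ → r i ≤ 2 * r (i + 1))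
    (hne : H ≠ 0)
    (hbdd : ∀ S ∈ H, S.card ≤ r 1)
    (hspread : ∀ A : Finset V,
      ((H.filter (fun S => A ⊆ S)).card : ℝ) ≤ q ^ A.card * H.card) :
    H ≠ 0 ∧ (∀ S ∈ H, S.card ≤ r 1) ∧
    ∀ A : Finset V,
      0 < (H.filter (fun S => A ⊆ S)).card →
      ∀ i, 1 ≤ i → i + 1 ≤ ℓ → r (i + 1) ≤ A.card → A.card ≤ r i →
      ∀ j, r (i + 1) ≤ j →
        ((H.filter (fun S => j ≤ (A ∩ S).card)).card : ℝ) ≤ (4 * q) ^ j * H.card := by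
  refine ⟨hne, hbdd, ?_⟩
  intro A _ i hi1 hiℓ hrA hAr j hj
  have hAcard : A.card ≤ 2 * j :=
    hAr.trans ((hrhalf i hi1 hiℓ).trans (by omega))
  have hHpos : (0 : ℝ) ≤ (H.card : ℝ) := Nat.cast_nonneg _
  calc ((H.filter (fun S => j ≤ (A ∩ S).card)).card : ℝ)
      ≤ ∑ B ∈ A.powersetCard j, ((H.filter (fun S => B ⊆ S)).card : ℝ) := by
        exact_mod_cast count_aux A j H
    _ ≤ ∑ B ∈ A.powersetCard j, q ^ j * H.card := by
        refine Finset.sum_le_sum fun B hB => ?_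
        have hcard := (Finset.mem_powersetCard.mp hB).2
        have := hspread B
        rwa [hcard] at this
    _ = (A.card.choose j : ℝ) * (q ^ j * H.card) := by
        rw [Finset.sum_const, Finset.card_powersetCard, nsmul_eq_mul]
    _ ≤ (2 : ℝ) ^ (2 * j) * (q ^ j * H.card) := by
        refine mul_le_mul_of_nonneg_right ?_
          (mul_nonneg (pow_nonneg hq0.le _) hHpos)
        have h1 : A.card.choose j ≤ 2 ^ (2 * j) :=
          (choose_le_two_pow' A.card j).trans (Nat.pow_le_pow_right (by norm_num) hAcard)
        exact_mod_cast h1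
    _ = (4 * q) ^ j * H.card := by
        rw [mul_pow, pow_mul]
        norm_num
        ring
end

section
/- Let n, r, w, j be nonnegative integers with j ≤ r, w ≤ n - r, and w, n-r positive. Then [C(w, r-j)/C(n-r, r-j)] · [C(n, w+r)/C(n-r, w)] ≤ (w/(n-r))^{r-j} · ((n-r)/w)^r = (w/(n-r))^{-j}, i.e., the product is at most ((n-r)/w)^j. -/
/-!
With `m = n - r` and `k = r - j`, both quotients are ratios of falling factorials:
`C(w, k) / C(m, k) = (w)_k / (m)_k` and `C(m + r, w + r) / C(m, w) = (m + r)_r / (w + r)_r`.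
For `w ≤ m` each factor `(w - i) / (m - i)` of the first is at most `w / m`, and each factor
`(m + r - i) / (w + r - i)` of the second is at most `m / w`. Hence the product is at most
`(w / m)^k * (m / w)^r = (m / w)^j`.
-/

namespace Nat

theorem descFactorial_mul_pow_le_descFactorial_mul_pow {w m : ℕ} (hwm : w ≤ m) (k : ℕ) :
    w.descFactorial k * m ^ k ≤ m.descFactorial k * w ^ k := by
  induction k with
  | zero => simp
  | succ k ih =>
    have step : (w - k) * m ≤ (m - k) * w := by
      rw [Nat.sub_mul, Nat.sub_mul, mul_comm w m]
      exact Nat.sub_le_sub_left (Nat.mul_le_mul_left k hwm) _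
    calc w.descFactorial (k + 1) * m ^ (k + 1)
        = ((w - k) * m) * (w.descFactorial k * m ^ k) := by
          rw [descFactorial_succ, pow_succ]; ring
      _ ≤ ((m - k) * w) * (m.descFactorial k * w ^ k) := Nat.mul_le_mul step ih
      _ = m.descFactorial (k + 1) * w ^ (k + 1) := by
          rw [descFactorial_succ, pow_succ]; ring

theorem add_descFactorial_mul_pow_le {w m : ℕ} (hwm : w ≤ m) (r : ℕ) :
    (m + r).descFactorial r * w ^ r ≤ (w + r).descFactorial r * m ^ r := by
  induction r with
  | zero => simp
  | succ r ih =>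
    have step : (m + r + 1) * w ≤ (w + r + 1) * m := by
      nlinarith [Nat.mul_le_mul_left r hwm]
    calc (m + (r + 1)).descFactorial (r + 1) * w ^ (r + 1)
        = ((m + r + 1) * w) * ((m + r).descFactorial r * w ^ r) := by
          rw [← add_assoc, succ_descFactorial_succ, pow_succ]; ring
      _ ≤ ((w + r + 1) * m) * ((w + r).descFactorial r * m ^ r) := Nat.mul_le_mul step ih
      _ = (w + (r + 1)).descFactorial (r + 1) * m ^ (r + 1) := by
          rw [← add_assoc, succ_descFactorial_succ, pow_succ]; ring

theorem choose_mul_pow_le_pow_mul_choose {w m : ℕ} (hwm : w ≤ m) (k : ℕ) :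
    w.choose k * m ^ k ≤ w ^ k * m.choose k := by
  have h := descFactorial_mul_pow_le_descFactorial_mul_pow hwm k
  rw [descFactorial_eq_factorial_mul_choose, descFactorial_eq_factorial_mul_choose,
    mul_assoc, mul_assoc] at h
  exact (Nat.le_of_mul_le_mul_left h k.factorial_pos).trans_eq (mul_comm _ _)

theorem add_choose_add_mul_descFactorial (m w r : ℕ) :
    (m + r).choose (w + r) * (w + r).descFactorial r = (m + r).descFactorial r * m.choose w := by
  rw [descFactorial_eq_factorial_mul_choose, descFactorial_eq_factorial_mul_choose,
    mul_left_comm, choose_mul (le_add_left r w)]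
  simp only [Nat.add_sub_cancel, mul_assoc]

theorem add_choose_add_mul_pow_le {w m : ℕ} (hwm : w ≤ m) (r : ℕ) :
    (m + r).choose (w + r) * w ^ r ≤ m ^ r * m.choose w := by
  refine Nat.le_of_mul_le_mul_right ?_ (descFactorial_pos.2 (le_add_left r w))
  calc (m + r).choose (w + r) * w ^ r * (w + r).descFactorial r
      = (m + r).descFactorial r * w ^ r * m.choose w := by
        rw [mul_right_comm, add_choose_add_mul_descFactorial, mul_right_comm]
    _ ≤ (w + r).descFactorial r * m ^ r * m.choose w :=
        Nat.mul_le_mul_right _ (add_descFactorial_mul_pow_le hwm r)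
    _ = m ^ r * m.choose w * (w + r).descFactorial r := by ring

theorem cast_choose_div_choose_le_div_pow {w m : ℕ} (hwm : w ≤ m) (k : ℕ) :
    (w.choose k : ℝ) / m.choose k ≤ ((w : ℝ) / m) ^ k := by
  rcases Nat.eq_zero_or_pos m with rfl | hm
  · obtain rfl : w = 0 := by omega
    rcases k with _ | k <;> simp
  rcases lt_or_ge m k with hmk | hkm
  · rw [choose_eq_zero_of_lt (hwm.trans_lt hmk), cast_zero, zero_div]
    positivity
  rw [div_pow, div_le_div_iff₀ (by exact_mod_cast choose_pos hkm) (by positivity)]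
  exact_mod_cast choose_mul_pow_le_pow_mul_choose hwm k

theorem cast_add_choose_add_div_choose_le_div_pow {w m : ℕ} (hwm : w ≤ m) (hw : 0 < w) (r : ℕ) :
    ((m + r).choose (w + r) : ℝ) / m.choose w ≤ ((m : ℝ) / w) ^ r := by
  rw [div_pow, div_le_div_iff₀ (by exact_mod_cast choose_pos hwm) (by positivity)]
  exact_mod_cast add_choose_add_mul_pow_le hwm r

end Nat

theorem stmt7_general (n r w j : ℕ) (hj : j ≤ r) (hw : w ≤ n - r)
    (hwpos : 0 < w) :
    ((w.choose (r - j) : ℝ) / ((n - r).choose (r - j))) *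
      ((n.choose (w + r) : ℝ) / ((n - r).choose w))
      ≤ (((n - r : ℕ) : ℝ) / w) ^ j := by
  obtain ⟨k, rfl⟩ : ∃ k, r = k + j := ⟨r - j, by omega⟩
  obtain ⟨m, rfl⟩ : ∃ m, n = m + (k + j) := ⟨n - (k + j), by omega⟩
  simp only [Nat.add_sub_cancel] at hw ⊢
  have hm : (0 : ℝ) < m := by exact_mod_cast hwpos.trans_le hw
  calc _ ≤ ((w : ℝ) / m) ^ k * ((m : ℝ) / w) ^ (k + j) :=
        mul_le_mul (Nat.cast_choose_div_choose_le_div_pow hw k)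
          (Nat.cast_add_choose_add_div_choose_le_div_pow hw hwpos (k + j))
          (by positivity) (by positivity)
    _ = ((m : ℝ) / w) ^ j := by
        rw [pow_add, ← mul_assoc, ← mul_pow, div_mul_div_cancel₀ hm.ne',
          div_self (by positivity), one_pow, one_mul]

theorem stmt7 (n r w j : ℕ) (hj : j ≤ r) (hrn : r ≤ n) (hw : w ≤ n - r)
    (hwpos : 0 < w) (hnr : 0 < n - r) (hwr : w + r ≤ n) :
    ((w.choose (r - j) : ℝ) / ((n - r).choose (r - j))) *
      ((n.choose (w + r) : ℝ) / ((n - r).choose w))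
      ≤ (((n - r : ℕ) : ℝ) / w) ^ j :=
  stmt7_general n r w j hj hw hwpos
end

section
/- Let H be an r-uniform hypergraph on a finite set V, and for an edge S let m_j(S) denote the number of edges S' of H with |S ∩ S'| = j. Suppose m_j(S) ≤ q^j |H| for all S ∈ H and all j ≥ 1, and let α ∈ (0,1) with α ≥ 4q. If X is the number of edges contained in a random subset W' of V formed by including each vertex independently with probability α/2, then Var(X) ≤ 4 q α^{-1} E[X]^2. -/
open Finset


lemma msum_finsum_swap {β ι : Type*} (m : Multiset β) (s : Finset ι) (f : β → ι → ℝ) :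
    ∑ i ∈ s, (m.map (fun b => f b i)).sum = (m.map (fun b => ∑ i ∈ s, f b i)).sum := by
  induction m using Multiset.induction with
  | empty => simp
  | cons a m ih => simp [Finset.sum_add_distrib, ih]

lemma card_filter_eq_msum {β : Type*} (m : Multiset β) (P : β → Prop) [DecidablePred P] :
    ((m.filter P).card : ℝ) = (m.map (fun b => if P b then (1:ℝ) else 0)).sum := by
  induction m using Multiset.induction with
  | empty => simp
  | cons a m ih => by_cases h : P a <;> simp [h, ih, add_comm]

lemma expect_subset {V : Type*} [DecidableEq V] [Fintype V] (p : ℝ) (T : Finset V) :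
    ∑ W ∈ (univ : Finset V).powerset,
      (p ^ W.card * (1-p) ^ (Fintype.card V - W.card)) * (if T ⊆ W then (1:ℝ) else 0)
      = p ^ T.card := by
  have h := Finset.prod_add (fun _ : V => p) (fun i => if i ∈ T then 0 else 1-p) univ
  have hL : ∏ i : V, ((fun _ : V => p) i + (fun i => if i ∈ T then 0 else 1-p) i)
      = p ^ T.card := by
    have : ∀ i : V, p + (if i ∈ T then 0 else 1-p) = (if i ∈ T then p else 1) := by
      intro i; split <;> ring
    rw [Finset.prod_congr rfl (fun i _ => this i), Finset.prod_ite_mem, univ_inter,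
      Finset.prod_const]
  have hR : ∀ W ∈ (univ : Finset V).powerset,
      (∏ i ∈ W, (fun _ : V => p) i) * ∏ i ∈ univ \ W, (fun i => if i ∈ T then 0 else 1-p) i
      = (p ^ W.card * (1-p) ^ (Fintype.card V - W.card)) * (if T ⊆ W then (1:ℝ) else 0) := by
    intro W hW
    rw [Finset.mem_powerset] at hW
    by_cases hT : T ⊆ W
    · have : ∀ i ∈ univ \ W, (if i ∈ T then (0:ℝ) else 1-p) = 1-p := by
        intro i hi
        rw [Finset.mem_sdiff] at hi
        exact if_neg (fun h => hi.2 (hT h))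
      rw [Finset.prod_congr rfl this, Finset.prod_const, Finset.prod_const,
        Finset.card_sdiff_of_subset hW, card_univ, if_pos hT, mul_one]
    · obtain ⟨i, hiT, hiW⟩ := Finset.not_subset.mp hT
      have hz : (∏ i ∈ univ \ W, (fun i => if i ∈ T then (0:ℝ) else 1-p) i) = 0 :=
        Finset.prod_eq_zero (Finset.mem_sdiff.mpr ⟨mem_univ i, hiW⟩) (by simp [hiT])
      rw [hz, mul_zero, if_neg hT, mul_zero]
  rw [← Finset.sum_congr rfl hR, ← h, hL]

lemma geom_aux (x : ℝ) (hx0 : 0 ≤ x) (hx : x ≤ 1/2) (r : ℕ) :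
    ∑ j ∈ Finset.Icc 1 r, x ^ j ≤ 2 * x := by
  have key : ∀ n : ℕ, ∑ i ∈ Finset.range n, x ^ i ≤ 2 := by
    intro n
    induction n with
    | zero => norm_num
    | succ n ih =>
      rw [Finset.sum_range_succ']
      have : x * ∑ i ∈ Finset.range n, x ^ i ≤ (1/2) * 2 := by
        apply mul_le_mul hx ih (Finset.sum_nonneg fun i _ => pow_nonneg hx0 i) (by norm_num)
      simp only [pow_succ, pow_zero]
      calc ∑ i ∈ Finset.range n, x ^ i * x + 1
          = x * (∑ i ∈ Finset.range n, x ^ i) + 1 := by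
            rw [Finset.mul_sum]; simp [mul_comm]
        _ ≤ (1/2) * 2 + 1 := by linarith
        _ = 2 := by norm_num
  have : ∑ j ∈ Finset.Icc 1 r, x ^ j = x * ∑ i ∈ Finset.range r, x ^ i := by
    rw [← Finset.Ico_add_one_right_eq_Icc, Finset.sum_Ico_eq_sum_range, Finset.mul_sum]
    exact Finset.sum_congr rfl fun i _ => by rw [pow_add, pow_one]
  rw [this]
  calc x * ∑ i ∈ Finset.range r, x ^ i ≤ x * 2 := by
        apply mul_le_mul_of_nonneg_left (key r) hx0
    _ = 2 * x := by ring

lemma moment1 {V : Type*} [DecidableEq V] [Fintype V] (H : Multiset (Finset V)) (p : ℝ) :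
    ∑ W ∈ (univ : Finset V).powerset,
      (p ^ W.card * (1 - p) ^ (Fintype.card V - W.card)) *
        ((H.filter (fun S => S ⊆ W)).card : ℝ)
    = (H.map (fun S => p ^ S.card)).sum := by
  calc ∑ W ∈ (univ : Finset V).powerset,
        (p ^ W.card * (1 - p) ^ (Fintype.card V - W.card)) *
          ((H.filter (fun S => S ⊆ W)).card : ℝ)
      = ∑ W ∈ (univ : Finset V).powerset,
          (H.map (fun S => (p ^ W.card * (1 - p) ^ (Fintype.card V - W.card)) *
            (if S ⊆ W then (1:ℝ) else 0))).sum := by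
        refine Finset.sum_congr rfl fun W _ => ?_
        rw [card_filter_eq_msum]
        exact (Multiset.sum_map_mul_left).symm
    _ = (H.map (fun S => ∑ W ∈ (univ : Finset V).powerset,
          (p ^ W.card * (1 - p) ^ (Fintype.card V - W.card)) *
            (if S ⊆ W then (1:ℝ) else 0))).sum := msum_finsum_swap _ _ _
    _ = _ := congrArg _ (Multiset.map_congr rfl fun S _ => expect_subset p S)

lemma moment2 {V : Type*} [DecidableEq V] [Fintype V] (H : Multiset (Finset V)) (p : ℝ) :
    ∑ W ∈ (univ : Finset V).powerset,
      (p ^ W.card * (1 - p) ^ (Fintype.card V - W.card)) *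
        ((H.filter (fun S => S ⊆ W)).card : ℝ) ^ 2
    = (H.map (fun S => (H.map (fun S' => p ^ (S ∪ S').card)).sum)).sum := by
  calc ∑ W ∈ (univ : Finset V).powerset,
        (p ^ W.card * (1 - p) ^ (Fintype.card V - W.card)) *
          ((H.filter (fun S => S ⊆ W)).card : ℝ) ^ 2
      = ∑ W ∈ (univ : Finset V).powerset,
          (H.map (fun S => (H.map (fun S' =>
            (p ^ W.card * (1 - p) ^ (Fintype.card V - W.card)) *
              (if S ∪ S' ⊆ W then (1:ℝ) else 0))).sum)).sum := by
        refine Finset.sum_congr rfl fun W _ => ?_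
        rw [card_filter_eq_msum]
        set μ : ℝ := p ^ W.card * (1 - p) ^ (Fintype.card V - W.card) with hμ
        have hsplit : ∀ S : Finset V,
            (H.map (fun S' => μ * (if S ∪ S' ⊆ W then (1:ℝ) else 0))).sum
            = (μ * (if S ⊆ W then (1:ℝ) else 0)) *
                (H.map (fun S' => if S' ⊆ W then (1:ℝ) else 0)).sum := by
          intro S
          rw [← Multiset.sum_map_mul_left]
          refine congrArg Multiset.sum (Multiset.map_congr rfl fun S' _ => ?_)
          by_cases h1 : S ⊆ W <;> by_cases h2 : S' ⊆ W <;>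
            simp [h1, h2, Finset.union_subset_iff]
        symm
        calc (H.map (fun S => (H.map (fun S' =>
              μ * (if S ∪ S' ⊆ W then (1:ℝ) else 0))).sum)).sum
            = (H.map (fun S => (μ * (if S ⊆ W then (1:ℝ) else 0)) *
                (H.map (fun S' => if S' ⊆ W then (1:ℝ) else 0)).sum)).sum :=
              congrArg _ (Multiset.map_congr rfl fun S _ => hsplit S)
          _ = (H.map (fun S => μ * (if S ⊆ W then (1:ℝ) else 0))).sum *
                (H.map (fun S' => if S' ⊆ W then (1:ℝ) else 0)).sum :=
              Multiset.sum_map_mul_right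
          _ = (μ * (H.map (fun S => if S ⊆ W then (1:ℝ) else 0)).sum) *
                (H.map (fun S' => if S' ⊆ W then (1:ℝ) else 0)).sum := by
              rw [Multiset.sum_map_mul_left]
          _ = μ * ((H.map (fun S => if S ⊆ W then (1:ℝ) else 0)).sum) ^ 2 := by ring
    _ = (H.map (fun S => ∑ W ∈ (univ : Finset V).powerset,
          (H.map (fun S' =>
            (p ^ W.card * (1 - p) ^ (Fintype.card V - W.card)) *
              (if S ∪ S' ⊆ W then (1:ℝ) else 0))).sum)).sum := msum_finsum_swap _ _ _
    _ = (H.map (fun S => (H.map (fun S' => ∑ W ∈ (univ : Finset V).powerset,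
          (p ^ W.card * (1 - p) ^ (Fintype.card V - W.card)) *
            (if S ∪ S' ⊆ W then (1:ℝ) else 0))).sum)).sum :=
        congrArg _ (Multiset.map_congr rfl fun S _ => msum_finsum_swap _ _ _)
    _ = _ := congrArg _ (Multiset.map_congr rfl fun S _ =>
        congrArg _ (Multiset.map_congr rfl fun S' _ => expect_subset p (S ∪ S')))

theorem stmt10 {V : Type*} [DecidableEq V] [Fintype V]
    (H : Multiset (Finset V)) (r : ℕ) (q α : ℝ)
    (hne : H ≠ 0) (hq : 0 < q) (hα0 : 0 < α) (hα1 : α < 1) (hαq : 4 * q ≤ α)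
    (hunif : ∀ S ∈ H, S.card = r)
    (hm : ∀ S ∈ H, ∀ j : ℕ, 1 ≤ j →
      ((H.filter (fun S' => (S ∩ S').card = j)).card : ℝ) ≤ q ^ j * H.card) :
    (∑ W ∈ (univ : Finset V).powerset,
        ((α/2) ^ W.card * (1 - α/2) ^ (Fintype.card V - W.card)) *
          (((H.filter (fun S => S ⊆ W)).card : ℝ)) ^ 2)
      - (∑ W ∈ (univ : Finset V).powerset,
          ((α/2) ^ W.card * (1 - α/2) ^ (Fintype.card V - W.card)) *
            ((H.filter (fun S => S ⊆ W)).card : ℝ)) ^ 2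
    ≤ 4 * q / α *
        (∑ W ∈ (univ : Finset V).powerset,
          ((α/2) ^ W.card * (1 - α/2) ^ (Fintype.card V - W.card)) *
            ((H.filter (fun S => S ⊆ W)).card : ℝ)) ^ 2 := by
  rw [moment1, moment2]
  set p : ℝ := α/2 with hp
  set N : ℝ := (Multiset.card H : ℝ) with hN
  have hp0 : (0:ℝ) < p := by rw [hp]; linarith
  have hpne : p ≠ 0 := ne_of_gt hp0
  have hN0 : (0:ℝ) ≤ N := by rw [hN]; positivity
  -- first moment
  have hfirst : (H.map (fun S => p ^ S.card)).sum = p ^ r * N := by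
    rw [Multiset.map_congr rfl (fun S hS => by rw [hunif S hS] :
      ∀ S ∈ H, p ^ S.card = p ^ r)]
    rw [Multiset.map_const', Multiset.sum_replicate, nsmul_eq_mul, mul_comm]
  -- per-edge bound on inner sum
  have hinner : ∀ S ∈ H, (H.map (fun S' => p ^ (S ∪ S').card)).sum
      ≤ p ^ (2*r) * N + ∑ j ∈ Finset.Icc 1 r, p ^ (2*r - j) * (q ^ j * N) := by
    intro S hS
    have step1 : (H.map (fun S' => p ^ (S ∪ S').card)).sum
        ≤ (H.map (fun S' => p ^ (2*r) +
            ∑ j ∈ Finset.Icc 1 r, p ^ (2*r - j) *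
              (if (S ∩ S').card = j then (1:ℝ) else 0))).sum := by
      apply Multiset.sum_map_le_sum_map
      intro S' hS'
      have hj0r : (S ∩ S').card ≤ r := by
        rw [← hunif S hS]; exact Finset.card_le_card Finset.inter_subset_left
      have hcard : (S ∪ S').card = 2*r - (S ∩ S').card := by
        have h := Finset.card_union_add_card_inter S S'
        rw [hunif S hS, hunif S' hS'] at h; omega
      rw [hcard]
      by_cases h0 : (S ∩ S').card = 0
      · have hz : ∑ j ∈ Finset.Icc 1 r, p ^ (2*r - j) *
            (if (S ∩ S').card = j then (1:ℝ) else 0) = 0 := by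
          apply Finset.sum_eq_zero
          intro j hj
          rw [Finset.mem_Icc] at hj
          rw [if_neg (by omega), mul_zero]
        rw [hz, h0, Nat.sub_zero, add_zero]
      · have h1 : 1 ≤ (S ∩ S').card := Nat.one_le_iff_ne_zero.mpr h0
        have hsum : ∑ j ∈ Finset.Icc 1 r, p ^ (2*r - j) *
            (if (S ∩ S').card = j then (1:ℝ) else 0) = p ^ (2*r - (S ∩ S').card) := by
          rw [Finset.sum_eq_single ((S ∩ S').card)]
          · simp
          · intro b _ hbne
            rw [if_neg (fun h => hbne h.symm), mul_zero]
          · intro h; exact absurd (Finset.mem_Icc.mpr ⟨h1, hj0r⟩) h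
        rw [hsum]
        have : (0:ℝ) ≤ p ^ (2*r) := by positivity
        linarith
    have step2 : (H.map (fun S' => p ^ (2*r) +
          ∑ j ∈ Finset.Icc 1 r, p ^ (2*r - j) *
            (if (S ∩ S').card = j then (1:ℝ) else 0))).sum
        ≤ p ^ (2*r) * N + ∑ j ∈ Finset.Icc 1 r, p ^ (2*r - j) * (q ^ j * N) := by
      rw [Multiset.sum_map_add]
      have hc : (H.map (fun _ => p ^ (2*r))).sum = p ^ (2*r) * N := by
        rw [Multiset.map_const', Multiset.sum_replicate, nsmul_eq_mul, mul_comm]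
      rw [hc]
      gcongr
      rw [← msum_finsum_swap]
      apply Finset.sum_le_sum
      intro j hj
      rw [Finset.mem_Icc] at hj
      rw [Multiset.sum_map_mul_left, ← card_filter_eq_msum]
      exact mul_le_mul_of_nonneg_left (hm S hS j hj.1) (by positivity)
    exact step1.trans step2
  -- total double sum bound
  have hDS : (H.map (fun S => (H.map (fun S' => p ^ (S ∪ S').card)).sum)).sum
      ≤ N * (p ^ (2*r) * N + ∑ j ∈ Finset.Icc 1 r, p ^ (2*r - j) * (q ^ j * N)) := by
    calc (H.map (fun S => (H.map (fun S' => p ^ (S ∪ S').card)).sum)).sum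
        ≤ (H.map (fun _ => p ^ (2*r) * N +
            ∑ j ∈ Finset.Icc 1 r, p ^ (2*r - j) * (q ^ j * N))).sum :=
          Multiset.sum_map_le_sum_map _ _ hinner
      _ = N * (p ^ (2*r) * N + ∑ j ∈ Finset.Icc 1 r, p ^ (2*r - j) * (q ^ j * N)) := by
          rw [Multiset.map_const', Multiset.sum_replicate, nsmul_eq_mul]
  -- geometric bound
  have hgeom : ∑ j ∈ Finset.Icc 1 r, p ^ (2*r - j) * q ^ j ≤ p ^ (2*r) * (4 * q / α) := by
    have hqp : q / p ≤ 1/2 := by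
      rw [hp, div_le_div_iff₀ (by linarith) (by norm_num)]; linarith
    have hqp0 : 0 ≤ q / p := le_of_lt (div_pos hq hp0)
    have h1 : ∑ j ∈ Finset.Icc 1 r, p ^ (2*r - j) * q ^ j
        = p ^ (2*r) * ∑ j ∈ Finset.Icc 1 r, (q / p) ^ j := by
      rw [Finset.mul_sum]
      refine Finset.sum_congr rfl fun j hj => ?_
      rw [Finset.mem_Icc] at hj
      have hj2 : j ≤ 2*r := by omega
      have hd : (q/p)^j = q^j / p^j := div_pow q p j
      rw [pow_sub₀ p hpne hj2, hd]
      ring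
    rw [h1]
    have h2 : ∑ j ∈ Finset.Icc 1 r, (q / p) ^ j ≤ 2 * (q / p) := geom_aux _ hqp0 hqp r
    have h3 : 2 * (q / p) = 4 * q / α := by rw [hp]; field_simp; ring
    calc p ^ (2*r) * ∑ j ∈ Finset.Icc 1 r, (q / p) ^ j
        ≤ p ^ (2*r) * (2 * (q / p)) := by
          apply mul_le_mul_of_nonneg_left h2 (by positivity)
      _ = p ^ (2*r) * (4 * q / α) := by rw [h3]
  -- finish
  rw [hfirst]
  have hsq : (p ^ r * N) ^ 2 = p ^ (2*r) * N ^ 2 := by ring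
  rw [hsq]
  have hsum2 : ∑ j ∈ Finset.Icc 1 r, p ^ (2*r - j) * (q ^ j * N)
      = (∑ j ∈ Finset.Icc 1 r, p ^ (2*r - j) * q ^ j) * N := by
    rw [Finset.sum_mul]
    exact Finset.sum_congr rfl fun j _ => by ring
  have hkey : N * (p ^ (2*r) * N + ∑ j ∈ Finset.Icc 1 r, p ^ (2*r - j) * (q ^ j * N))
      ≤ p ^ (2*r) * N ^ 2 + 4 * q / α * (p ^ (2*r) * N ^ 2) := by
    rw [hsum2]
    have h4 : (∑ j ∈ Finset.Icc 1 r, p ^ (2*r - j) * q ^ j) * (N*N)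
        ≤ p ^ (2*r) * (4*q/α) * (N*N) :=
      mul_le_mul_of_nonneg_right hgeom (mul_nonneg hN0 hN0)
    nlinarith [h4]
  linarith [hDS.trans hkey]
end

section
/- Let H be an r-uniform (q; r, 1)-spread hypergraph on a finite set V with q > 0, and let α ∈ (0,1) with α ≥ 4q. If W' is a random subset of V including each vertex independently with probability α/2, then the probability that W' contains no edge of H is at most 4q/α. -/
/-!
Let `X` count the edges inside the `p`-random set, `p = α / 2`. Then `E X = |H| p ^ r` and,
by uniformity, `E X² = ∑_{S,T} p ^ |S ∪ T| = p ^ (2r) ∑_{S,T} (1/p) ^ |S ∩ T|`. Bounding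
`(1/p) ^ k ≤ ∑_{j ≤ k} (1/p) ^ j` and counting by layers, the inner sum over `T` is at most
`∑_j m_j(S) (1/p) ^ j ≤ |H| ∑_j (q/p) ^ j ≤ |H| (1 + 2q/p)`, because `q/p ≤ 1/2`. Hence
`Var X ≤ (2q/p) (E X)²` and Chebyshev gives `P(X = 0) ≤ 2q/p = 4q/α`.
-/

open Finset

theorem Multiset.sum_map_ite_const_zero {α R : Type*} [NonAssocSemiring R] (s : Multiset α)
    (P : α → Prop) [DecidablePred P] (d : R) :
    (s.map fun a => if P a then d else 0).sum = Multiset.card (s.filter P) * d := by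
  induction s using Multiset.induction_on with
  | empty => simp
  | cons a s ih => by_cases h : P a <;> simp [h, ih, add_mul, add_comm]

theorem Finset.sum_multiset_map_sum_comm {α β M : Type*} [AddCommMonoid M] (s : Finset α)
    (H : Multiset β) (f : α → β → M) :
    ∑ W ∈ s, (H.map fun S => f W S).sum = (H.map fun S => ∑ W ∈ s, f W S).sum := by
  simp only [sum_eq_multiset_sum]
  exact Multiset.sum_map_sum_map _ _

theorem Multiset.sum_map_pow_le_sum_card_filter_mul_pow {α : Type*} (s : Multiset α)
    (k : α → ℕ) {r : ℕ} (hk : ∀ a ∈ s, k a ≤ r) {x : ℝ} (hx : 0 ≤ x) :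
    (s.map fun a => x ^ k a).sum
      ≤ ∑ i ∈ Finset.range (r + 1), (Multiset.card (s.filter fun a => i ≤ k a) : ℝ) * x ^ i := by
  have hpoint : ∀ a ∈ s, x ^ k a ≤ ∑ i ∈ Finset.range (r + 1), if i ≤ k a then x ^ i else 0 := by
    intro a ha
    rw [← sum_filter]
    refine Finset.single_le_sum (f := fun i => x ^ i) (fun i _ => pow_nonneg hx i) ?_
    simpa [Nat.lt_succ_iff] using hk a ha
  calc (s.map fun a => x ^ k a).sum
      ≤ (s.map fun a => ∑ i ∈ Finset.range (r + 1), if i ≤ k a then x ^ i else 0).sum :=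
        Multiset.sum_map_le_sum_map _ _ hpoint
    _ = _ := by
        rw [← sum_multiset_map_sum_comm]
        simp only [Multiset.sum_map_ite_const_zero]

theorem sum_range_succ_pow_le_one_add_two_mul {t : ℝ} (ht0 : 0 ≤ t) (ht : t ≤ 1 / 2) (r : ℕ) :
    ∑ i ∈ range (r + 1), t ^ i ≤ 1 + 2 * t :=
  calc ∑ i ∈ range (r + 1), t ^ i = t * ∑ i ∈ range r, t ^ i + 1 := by
        simp only [sum_range_succ', pow_succ', mul_sum, pow_zero]
    _ ≤ t * 2 + 1 := by
        gcongr
        calc ∑ i ∈ range r, t ^ i ≤ ∑ i ∈ range r, (1 / 2 : ℝ) ^ i :=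
              sum_le_sum fun i _ => pow_le_pow_left₀ ht0 ht i
          _ ≤ 2 := sum_geometric_two_le r
    _ = 1 + 2 * t := by ring

theorem sum_filter_mul_sq_le_sum_mul_sq_sub_sq {ι : Type*} (s : Finset ι) (P : ι → Prop)
    [DecidablePred P] (μ X : ι → ℝ) (m : ℝ) (hμ : ∀ i ∈ s, 0 ≤ μ i) (hμ1 : ∑ i ∈ s, μ i = 1)
    (hm : ∑ i ∈ s, μ i * X i = m) (hX : ∀ i ∈ s, P i → X i = 0) :
    (∑ i ∈ s with P i, μ i) * m ^ 2 ≤ ∑ i ∈ s, μ i * X i ^ 2 - m ^ 2 :=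
  calc (∑ i ∈ s with P i, μ i) * m ^ 2 = ∑ i ∈ s with P i, μ i * (X i - m) ^ 2 := by
        rw [sum_mul]
        refine sum_congr rfl fun i hi => ?_
        obtain ⟨his, hPi⟩ := mem_filter.1 hi
        rw [hX i his hPi]
        ring
    _ ≤ ∑ i ∈ s, μ i * (X i - m) ^ 2 :=
        sum_le_sum_of_subset_of_nonneg (filter_subset _ _)
          fun i hi _ => mul_nonneg (hμ i hi) (sq_nonneg _)
    _ = ∑ i ∈ s, μ i * X i ^ 2 - 2 * m * ∑ i ∈ s, μ i * X i + m ^ 2 * ∑ i ∈ s, μ i := by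
        rw [mul_sum, mul_sum, ← sum_sub_distrib, ← sum_add_distrib]
        exact sum_congr rfl fun i _ => by ring
    _ = ∑ i ∈ s, μ i * X i ^ 2 - m ^ 2 := by rw [hm, hμ1]; ring

section EdgeCount

variable {V : Type*} [DecidableEq V]

def countEdgesIn (H : Multiset (Finset V)) (W : Finset V) : ℝ :=
  (H.map fun S => if S ⊆ W then 1 else 0).sum

theorem countEdgesIn_sq (H : Multiset (Finset V)) (W : Finset V) :
    countEdgesIn H W ^ 2
      = (H.map fun S => (H.map fun T => if S ∪ T ⊆ W then (1 : ℝ) else 0).sum).sum := by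
  rw [sq, countEdgesIn, ← Multiset.sum_map_mul_right]
  refine congrArg Multiset.sum (Multiset.map_congr rfl fun S _ => ?_)
  rw [← Multiset.sum_map_mul_left]
  refine congrArg Multiset.sum (Multiset.map_congr rfl fun T _ => ?_)
  by_cases hS : S ⊆ W <;> by_cases hT : T ⊆ W <;> simp [union_subset_iff, hS, hT]

theorem countEdgesIn_eq_zero {H : Multiset (Finset V)} {W : Finset V}
    (hW : ∀ S ∈ H, ¬ S ⊆ W) : countEdgesIn H W = 0 := by
  rw [countEdgesIn, Multiset.map_congr rfl fun S hS => if_neg (hW S hS)]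
  simp

end EdgeCount

section BernoulliSubset

variable {V : Type*} [Fintype V]

def bernoulliWeight (p : ℝ) (W : Finset V) : ℝ :=
  p ^ #W * (1 - p) ^ (Fintype.card V - #W)

theorem bernoulliWeight_nonneg {p : ℝ} (hp0 : 0 ≤ p) (hp1 : p ≤ 1) (W : Finset V) :
    0 ≤ bernoulliWeight p W := by
  have : 0 ≤ 1 - p := by linarith
  unfold bernoulliWeight
  positivity

variable [DecidableEq V]

theorem sum_bernoulliWeight_superset (p : ℝ) (A : Finset V) :
    ∑ W ∈ (univ : Finset V).powerset with A ⊆ W, bernoulliWeight p W = p ^ #A := by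
  -- in the expansion of `∏ i, (p + [i ∉ A] (1 - p))` the term of `W` vanishes unless `A ⊆ W`
  have h := prod_add (fun _ => p) (fun i => if i ∉ A then 1 - p else 0) univ
  have hl : ∀ i, (p + if i ∉ A then 1 - p else 0) = if i ∈ A then p else 1 := fun i => by
    split_ifs <;> ring
  simp only [hl, prod_ite_mem, univ_inter, prod_const, prod_ite_zero] at h
  rw [h, sum_filter]
  refine sum_congr rfl fun W _ => ?_
  have hsub : (∀ i ∈ univ \ W, i ∉ A) ↔ A ⊆ W := by
    simp only [mem_sdiff, mem_univ, true_and, subset_iff]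
    exact forall_congr' fun i => not_imp_not
  simp only [hsub, card_univ_sdiff, bernoulliWeight, mul_ite, mul_zero]

theorem sum_bernoulliWeight (p : ℝ) :
    ∑ W ∈ (univ : Finset V).powerset, bernoulliWeight p W = 1 := by
  simpa using sum_bernoulliWeight_superset p (∅ : Finset V)

theorem sum_bernoulliWeight_mul_ite_subset (p : ℝ) (A : Finset V) :
    ∑ W ∈ (univ : Finset V).powerset, bernoulliWeight p W * (if A ⊆ W then 1 else 0)
      = p ^ #A := by
  simp only [mul_ite, mul_one, mul_zero]
  rw [← sum_filter, sum_bernoulliWeight_superset]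

theorem sum_bernoulliWeight_mul_countEdgesIn (p : ℝ) (H : Multiset (Finset V)) :
    ∑ W ∈ (univ : Finset V).powerset, bernoulliWeight p W * countEdgesIn H W
      = (H.map fun S => p ^ #S).sum := by
  simp only [countEdgesIn, ← Multiset.sum_map_mul_left]
  rw [sum_multiset_map_sum_comm]
  simp only [sum_bernoulliWeight_mul_ite_subset]

theorem sum_bernoulliWeight_mul_countEdgesIn_sq (p : ℝ) (H : Multiset (Finset V)) :
    ∑ W ∈ (univ : Finset V).powerset, bernoulliWeight p W * countEdgesIn H W ^ 2
      = (H.map fun S => (H.map fun T => p ^ #(S ∪ T)).sum).sum := by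
  simp only [countEdgesIn_sq, ← Multiset.sum_map_mul_left]
  rw [sum_multiset_map_sum_comm]
  simp only [sum_multiset_map_sum_comm, sum_bernoulliWeight_mul_ite_subset]

end BernoulliSubset

section SpreadHypergraph

variable {V : Type*} [DecidableEq V]

theorem sum_map_pow_card_union_le {H : Multiset (Finset V)} {r : ℕ} {p q : ℝ}
    (hp : 0 < p) (hq : 0 ≤ q) (hqp : 2 * q ≤ p) (hunif : ∀ T ∈ H, #T = r)
    {S : Finset V} (hS : #S = r)
    (hm : ∀ j, 1 ≤ j → j ≤ r →
      (Multiset.card (H.filter fun T => j ≤ #(S ∩ T)) : ℝ) ≤ q ^ j * Multiset.card H) :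
    (H.map fun T => p ^ #(S ∪ T)).sum ≤ (1 + 2 * (q / p)) * Multiset.card H * p ^ (2 * r) := by
  have hunion : ∀ T ∈ H, p ^ #(S ∪ T) = p ^ (2 * r) * p⁻¹ ^ #(S ∩ T) := by
    intro T hT
    have hcard : #(S ∪ T) + #(S ∩ T) = 2 * r := by
      rw [card_union_add_card_inter, hS, hunif T hT, two_mul]
    rw [← hcard, pow_add, inv_pow, mul_inv_cancel_right₀ (pow_ne_zero _ hp.ne')]
  have hlayer : ∀ i ∈ Finset.range (r + 1),
      (Multiset.card (H.filter fun T => i ≤ #(S ∩ T)) : ℝ) * p⁻¹ ^ i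
        ≤ Multiset.card H * (q / p) ^ i := by
    intro i hi
    have hmi :
        (Multiset.card (H.filter fun T => i ≤ #(S ∩ T)) : ℝ) ≤ q ^ i * Multiset.card H := by
      rcases Nat.eq_zero_or_pos i with rfl | hi0
      · simp
      · exact hm i hi0 (Nat.lt_succ_iff.1 (mem_range.1 hi))
    calc _ ≤ q ^ i * Multiset.card H * p⁻¹ ^ i := by gcongr
      _ = _ := by rw [div_eq_mul_inv, mul_pow]; ring
  have hinter : (H.map fun T => p⁻¹ ^ #(S ∩ T)).sum ≤ Multiset.card H * (1 + 2 * (q / p)) :=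
    calc _ ≤ ∑ i ∈ Finset.range (r + 1),
            (Multiset.card (H.filter fun T => i ≤ #(S ∩ T)) : ℝ) * p⁻¹ ^ i :=
          Multiset.sum_map_pow_le_sum_card_filter_mul_pow H _
            (fun T hT => hunif T hT ▸ card_le_card inter_subset_right) (by positivity)
      _ ≤ Multiset.card H * ∑ i ∈ Finset.range (r + 1), (q / p) ^ i := by
          rw [mul_sum]; exact sum_le_sum hlayer
      _ ≤ Multiset.card H * (1 + 2 * (q / p)) := by
          gcongr
          exact sum_range_succ_pow_le_one_add_two_mul (by positivity)
            (by rw [div_le_iff₀ hp]; linarith) r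
  rw [Multiset.map_congr rfl hunion, Multiset.sum_map_mul_left]
  calc _ ≤ p ^ (2 * r) * (Multiset.card H * (1 + 2 * (q / p))) := by gcongr
    _ = _ := by ring

variable [Fintype V]

theorem sum_bernoulliWeight_mul_countEdgesIn_sq_le {H : Multiset (Finset V)} {r : ℕ} {p q : ℝ}
    (hp : 0 < p) (hq : 0 ≤ q) (hqp : 2 * q ≤ p) (hunif : ∀ T ∈ H, #T = r)
    (hm : ∀ S ∈ H, ∀ j, 1 ≤ j → j ≤ r →
      (Multiset.card (H.filter fun T => j ≤ #(S ∩ T)) : ℝ) ≤ q ^ j * Multiset.card H) :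
    ∑ W ∈ (univ : Finset V).powerset, bernoulliWeight p W * countEdgesIn H W ^ 2
      ≤ (1 + 2 * (q / p)) * (Multiset.card H * p ^ r) ^ 2 := by
  rw [sum_bernoulliWeight_mul_countEdgesIn_sq]
  calc _ ≤ (H.map fun _ => (1 + 2 * (q / p)) * Multiset.card H * p ^ (2 * r)).sum :=
        Multiset.sum_map_le_sum_map _ _ fun S hS =>
          sum_map_pow_card_union_le hp hq hqp hunif (hunif S hS) (hm S hS)
    _ = _ := by
        rw [Multiset.map_const', Multiset.sum_replicate, nsmul_eq_mul]
        ring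

end SpreadHypergraph

theorem stmt11 {V : Type*} [DecidableEq V] [Fintype V]
    (H : Multiset (Finset V)) (r : ℕ) (q α : ℝ)
    (hq : 0 < q) (hα0 : 0 < α) (hα1 : α < 1) (hαq : 4 * q ≤ α)
    (hne : H ≠ 0)
    (hunif : ∀ S ∈ H, S.card = r)
    (hspread : ∀ A : Finset V,
      0 < (H.filter (fun S => A ⊆ S)).card →
      1 ≤ A.card → A.card ≤ r → ∀ j : ℕ, 1 ≤ j →
        ((H.filter (fun S => j ≤ (A ∩ S).card)).card : ℝ) ≤ q ^ j * H.card) :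
    ∑ W ∈ (univ : Finset V).powerset.filter (fun W => ∀ S ∈ H, ¬ S ⊆ W),
        (α/2) ^ W.card * (1 - α/2) ^ (Fintype.card V - W.card)
      ≤ 4 * q / α := by
  set p := α / 2 with hpdef
  have hp : 0 < p := by positivity
  have hc : 2 * (q / p) = 4 * q / α := by field_simp [p]; ring
  have hm : ∀ S ∈ H, ∀ j, 1 ≤ j → j ≤ r →
      (Multiset.card (H.filter fun T => j ≤ #(S ∩ T)) : ℝ) ≤ q ^ j * Multiset.card H :=
    fun S hS j hj hjr => hspread S
      (Multiset.card_pos_iff_exists_mem.2 ⟨S, Multiset.mem_filter.2 ⟨hS, subset_rfl⟩⟩)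
      (hunif S hS ▸ hj.trans hjr) (hunif S hS).le j hj
  set m := Multiset.card H * p ^ r
  have hm0 : 0 < m := by
    have : 0 < Multiset.card H := Multiset.card_pos.2 hne
    positivity
  have hmean : ∑ W ∈ (univ : Finset V).powerset, bernoulliWeight p W * countEdgesIn H W = m := by
    rw [sum_bernoulliWeight_mul_countEdgesIn,
      Multiset.map_congr rfl fun S hS => by rw [hunif S hS], Multiset.map_const',
      Multiset.sum_replicate, nsmul_eq_mul]
  have hcheb := sum_filter_mul_sq_le_sum_mul_sq_sub_sq _ (fun W => ∀ S ∈ H, ¬ S ⊆ W) _ _ m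
    (fun W _ => bernoulliWeight_nonneg hp.le (by linarith) W) (sum_bernoulliWeight p) hmean
    (fun W _ hW => countEdgesIn_eq_zero hW)
  have hvar := sum_bernoulliWeight_mul_countEdgesIn_sq_le hp hq.le (by linarith) hunif hm
  rw [← hc]
  refine le_of_mul_le_mul_right (a := m ^ 2) ?_ (by positivity)
  change (∑ W ∈ _ with _, bernoulliWeight p W) * m ^ 2 ≤ _
  linarith
end

section
/- Let H be an r-uniform (q; r, 1)-spread hypergraph on a finite set V with α ∈ (0,1), α ≥ 4q, and α|V| an integer. If W is a uniformly random subset of V of size α|V|, then the probability that W contains no edge of H is at most 4q α^{-1} + 2 e^{-α|V|/4}. -/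
open Finset

/-- Number of m-subsets of V containing a fixed set A. -/
lemma spr_count {V : Type*} [DecidableEq V] [Fintype V] (A : Finset V) (m : ℕ)
    (hA : A.card ≤ m) :
    (((univ : Finset V).powersetCard m).filter (fun W => A ⊆ W)).card
      = (Fintype.card V - A.card).choose (m - A.card) := by
  rw [← Finset.card_compl A, ← Finset.card_powersetCard]
  apply Finset.card_bij' (fun W _ => W \ A) (fun B _ => B ∪ A)
  · intro W hW
    simp only [Finset.mem_filter, Finset.mem_powersetCard] at hW
    simp only [Finset.mem_powersetCard]
    refine ⟨fun x hx => ?_, ?_⟩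
    · simp only [Finset.mem_sdiff] at hx
      simp [hx.2]
    · rw [Finset.card_sdiff_of_subset hW.2, hW.1.2]
  · intro B hB
    simp only [Finset.mem_powersetCard] at hB
    have hdisj : Disjoint B A := by
      intro x hx1 hx2
      intro y hy
      have := hx1 hy
      have := hx2 hy
      have := hB.1 (hx1 hy)
      simp only [Finset.mem_compl] at this
      exact absurd (hx2 hy) this
    simp only [Finset.mem_filter, Finset.mem_powersetCard]
    refine ⟨⟨Finset.subset_univ _, ?_⟩, Finset.subset_union_right⟩
    rw [Finset.card_union_of_disjoint hdisj, hB.2]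
    omega
  · intro W hW
    simp only [Finset.mem_filter] at hW
    exact Finset.sdiff_union_of_subset hW.2
  · intro B hB
    simp only [Finset.mem_powersetCard] at hB
    apply Finset.union_sdiff_cancel_right
    intro x hx1 hx2
    intro y hy
    have := hB.1 (hx1 hy)
    simp only [Finset.mem_compl] at this
    exact absurd (hx2 hy) this

/-- choose recurrence in ℕ. -/
lemma spr_rec (n m u : ℕ) (hu : u < m) (hmn : m ≤ n) :
    (n - u) * ((n - (u+1)).choose (m - (u+1))) = ((n - u).choose (m - u)) * (m - u) := by
  have h1 : n - u = Nat.succ (n - (u+1)) := by omega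
  have h2 : m - u = Nat.succ (m - (u+1)) := by omega
  rw [h1, h2, Nat.add_one_mul_choose_eq]

lemma spr_rec_real (n m u : ℕ) (hu : u < m) (hmn : m ≤ n) :
    ((n:ℝ) - u) * ((n - (u+1)).choose (m - (u+1)) : ℝ)
      = ((n - u).choose (m - u) : ℝ) * ((m:ℝ) - u) := by
  have h := spr_rec n m u hu hmn
  have h1 : ((n - u : ℕ) : ℝ) = (n:ℝ) - u := by
    rw [Nat.cast_sub (by omega)]
  have h2 : ((m - u : ℕ) : ℝ) = (m:ℝ) - u := by
    rw [Nat.cast_sub (by omega)]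
  calc ((n:ℝ) - u) * ((n - (u+1)).choose (m - (u+1)) : ℝ)
      = (((n - u) * ((n - (u+1)).choose (m - (u+1))) : ℕ) : ℝ) := by push_cast [h1]; ring
    _ = ((((n - u).choose (m - u)) * (m - u) : ℕ) : ℝ) := by rw [h]
    _ = ((n - u).choose (m - u) : ℝ) * ((m:ℝ) - u) := by push_cast [h2]; ring

/-- Negative-correlation type inequality: F(a+b) F(0) ≤ F(a) F(b). -/
lemma spr_FB1 (n m : ℕ) (hmn : m < n) : ∀ b a, a + b ≤ m →
    ((n - (a+b)).choose (m - (a+b)) : ℝ) * (n.choose m : ℝ)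
      ≤ ((n - a).choose (m - a) : ℝ) * ((n - b).choose (m - b) : ℝ) := by
  intro b
  induction b with
  | zero => intro a ha; simp
  | succ b ih =>
    intro a ha
    have hab : a + b < m := by omega
    have hbm : b < m := by omega
    have IH := ih a (by omega)
    have r1 := spr_rec_real n m (a+b) hab (le_of_lt hmn)
    have r2 := spr_rec_real n m b hbm (le_of_lt hmn)
    have e1 : a + b + 1 = a + (b+1) := by ring
    rw [e1] at r1
    push_cast at r1 r2
    set FA1 : ℝ := ((n - (a+(b+1))).choose (m - (a+(b+1))) : ℝ) with hFA1
    set FA : ℝ := ((n - (a+b)).choose (m - (a+b)) : ℝ)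
    set F0 : ℝ := (n.choose m : ℝ)
    set Fa : ℝ := ((n - a).choose (m - a) : ℝ)
    set Fb : ℝ := ((n - b).choose (m - b) : ℝ)
    set Fb1 : ℝ := ((n - (b+1)).choose (m - (b+1)) : ℝ)
    have hFann : (0:ℝ) ≤ Fa := Nat.cast_nonneg _
    have hFbnn : (0:ℝ) ≤ Fb := Nat.cast_nonneg _
    have hnA : (0:ℝ) < (n:ℝ) - ((a:ℝ) + b) := by
      have h' : ((a+b:ℕ):ℝ) < (n:ℕ) := by exact_mod_cast (by omega : a + b < n)
      push_cast at h'; linarith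
    have hnb : (0:ℝ) < (n:ℝ) - (b:ℝ) := by
      have h' : ((b:ℕ):ℝ) < (n:ℕ) := by exact_mod_cast (by omega : b < n)
      push_cast at h'; linarith
    have hmA : (0:ℝ) < (m:ℝ) - ((a:ℝ) + b) := by
      have h' : ((a+b:ℕ):ℝ) < (m:ℕ) := by exact_mod_cast hab
      push_cast at h'; linarith
    have hmb : (0:ℝ) < (m:ℝ) - (b:ℝ) := by
      have h' : ((b:ℕ):ℝ) < (m:ℕ) := by exact_mod_cast hbm
      push_cast at h'; linarith
    have hcoef : ((m:ℝ) - ((a:ℝ)+b)) * ((n:ℝ) - b) ≤ ((n:ℝ) - ((a:ℝ)+b)) * ((m:ℝ) - b) := by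
      have hmn' : (m:ℝ) ≤ n := by exact_mod_cast le_of_lt hmn
      have ha' : (0:ℝ) ≤ (a:ℝ) := Nat.cast_nonneg _
      nlinarith
    have key : (((n:ℝ) - ((a:ℝ)+b)) * ((n:ℝ) - b)) * (FA1 * F0)
        ≤ (((n:ℝ) - ((a:ℝ)+b)) * ((n:ℝ) - b)) * (Fa * Fb1) := by
      calc (((n:ℝ) - ((a:ℝ)+b)) * ((n:ℝ) - b)) * (FA1 * F0)
          = (((n:ℝ) - ((a:ℝ)+b)) * FA1) * (((n:ℝ) - b) * F0) := by ring
        _ = (FA * ((m:ℝ) - ((a:ℝ)+b))) * (((n:ℝ) - b) * F0) := by rw [r1]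
        _ = (((m:ℝ) - ((a:ℝ)+b)) * ((n:ℝ) - b)) * (FA * F0) := by ring
        _ ≤ (((m:ℝ) - ((a:ℝ)+b)) * ((n:ℝ) - b)) * (Fa * Fb) :=
            mul_le_mul_of_nonneg_left IH (mul_nonneg hmA.le hnb.le)
        _ ≤ (((n:ℝ) - ((a:ℝ)+b)) * ((m:ℝ) - b)) * (Fa * Fb) :=
            mul_le_mul_of_nonneg_right hcoef (mul_nonneg hFann hFbnn)
        _ = (((n:ℝ) - ((a:ℝ)+b)) * Fa) * (Fb * ((m:ℝ) - b)) := by ring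
        _ = (((n:ℝ) - ((a:ℝ)+b)) * Fa) * (((n:ℝ) - b) * Fb1) := by rw [r2]
        _ = (((n:ℝ) - ((a:ℝ)+b)) * ((n:ℝ) - b)) * (Fa * Fb1) := by ring
    exact le_of_mul_le_mul_left key (mul_pos hnA hnb)

/-- Ratio bound: F(r-j) ≤ c^j F(r). -/
lemma spr_FB2 (n m r : ℕ) (c : ℝ) (hmn : m ≤ n) (hrm : r ≤ m) (hc0 : 0 ≤ c)
    (hc : ∀ u : ℕ, u < r → ((n:ℝ) - u) ≤ c * ((m:ℝ) - u)) :
    ∀ j, j ≤ r → ((n - (r - j)).choose (m - (r - j)) : ℝ)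
      ≤ c ^ j * ((n - r).choose (m - r) : ℝ) := by
  intro j
  induction j with
  | zero => intro _; simp
  | succ j ih =>
    intro hj
    have IH := ih (by omega)
    have hu : r - (j+1) < m := by omega
    have r1 := spr_rec_real n m (r - (j+1)) hu hmn
    have e1 : r - (j+1) + 1 = r - j := by omega
    rw [e1] at r1
    set u : ℕ := r - (j+1) with hudef
    have hcu := hc u (by omega)
    have hmu : (0:ℝ) < (m:ℝ) - (u:ℝ) := by
      have h' : ((u:ℕ):ℝ) < (m:ℕ) := by exact_mod_cast hu
      linarith
    set Fu : ℝ := ((n - u).choose (m - u) : ℝ)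
    set Frj : ℝ := ((n - (r - j)).choose (m - (r - j)) : ℝ)
    set Fr : ℝ := ((n - r).choose (m - r) : ℝ)
    have hFrjnn : (0:ℝ) ≤ Frj := Nat.cast_nonneg _
    have hFrnn : (0:ℝ) ≤ Fr := Nat.cast_nonneg _
    -- r1 : (n - u) * Frj = Fu * (m - u)
    have key : Fu * ((m:ℝ) - u) ≤ (c ^ (j+1) * Fr) * ((m:ℝ) - u) := by
      calc Fu * ((m:ℝ) - u) = ((n:ℝ) - u) * Frj := r1.symm
        _ ≤ (c * ((m:ℝ) - u)) * Frj := mul_le_mul_of_nonneg_right hcu hFrjnn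
        _ = (c * Frj) * ((m:ℝ) - u) := by ring
        _ ≤ (c * (c ^ j * Fr)) * ((m:ℝ) - u) := by
            apply mul_le_mul_of_nonneg_right _ hmu.le
            exact mul_le_mul_of_nonneg_left IH hc0
        _ = (c ^ (j+1) * Fr) * ((m:ℝ) - u) := by ring
    exact le_of_mul_le_mul_right key hmu

lemma spr_sum_add {β : Type*} (s : Multiset β) (f g : β → ℝ) :
    (s.map (fun b => f b + g b)).sum = (s.map f).sum + (s.map g).sum := by
  induction s using Multiset.induction with
  | empty => simp
  | cons a s ih => simp [ih]; ring

lemma spr_swap {β γ : Type*} (s : Multiset β) (t : Finset γ) (f : β → γ → ℝ) :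
    ∑ x ∈ t, (s.map (fun b => f b x)).sum = (s.map (fun b => ∑ x ∈ t, f b x)).sum := by
  induction s using Multiset.induction with
  | empty => simp
  | cons a s ih => simp [Finset.sum_add_distrib, ih]

lemma spr_card_filter {β : Type*} (s : Multiset β) (p : β → Prop) [DecidablePred p] :
    ((s.filter p).card : ℝ) = (s.map (fun b => if p b then (1:ℝ) else 0)).sum := by
  induction s using Multiset.induction with
  | empty => simp
  | cons a s ih =>
    by_cases h : p a <;> simp [Multiset.filter_cons, h, ih]; ring

lemma spr_mul_sum {β : Type*} (t : Multiset β) (c : ℝ) (g : β → ℝ) :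
    c * (t.map g).sum = (t.map (fun b => c * g b)).sum := by
  induction t using Multiset.induction with
  | empty => simp
  | cons a t ih => simp [mul_add, ih]

lemma spr_sum_mul_sum {β : Type*} (s t : Multiset β) (f g : β → ℝ) :
    (s.map f).sum * (t.map g).sum
      = (s.map (fun b => (t.map (fun b' => f b * g b')).sum)).sum := by
  induction s using Multiset.induction with
  | empty => simp
  | cons a s ih => simp [add_mul, ih, spr_mul_sum]

lemma spr_sum_le_sum {β : Type*} (s : Multiset β) (f g : β → ℝ)
    (h : ∀ b ∈ s, f b ≤ g b) : (s.map f).sum ≤ (s.map g).sum := by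
  induction s using Multiset.induction with
  | empty => simp
  | cons a s ih =>
    simp only [Multiset.map_cons, Multiset.sum_cons]
    have := h a (Multiset.mem_cons_self a s)
    have := ih (fun b hb => h b (Multiset.mem_cons_of_mem hb))
    linarith

lemma spr_sum_const {β : Type*} (s : Multiset β) (c : ℝ) :
    (s.map (fun _ => c)).sum = s.card * c := by
  induction s using Multiset.induction with
  | empty => simp
  | cons a s ih => simp [ih]; ring

/-- geometric tail bound -/
lemma spr_geom (x : ℝ) (hx0 : 0 ≤ x) (hx : x ≤ 1/3) :
    ∀ nn : ℕ, ∑ i ∈ Finset.range nn, x ^ i ≤ 3/2 := by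
  intro nn
  induction nn with
  | zero => norm_num
  | succ k ih =>
    rw [geom_sum_succ]
    nlinarith [Finset.sum_nonneg (fun i (_ : i ∈ Finset.range k) => pow_nonneg hx0 i)]

set_option maxHeartbeats 1000000 in
theorem stmt12 {V : Type*} [DecidableEq V] [Fintype V]
    (H : Multiset (Finset V)) (r m : ℕ) (q α : ℝ)
    (hq : 0 < q) (hα0 : 0 < α) (hα1 : α < 1) (hαq : 4 * q ≤ α)
    (hm : (m : ℝ) = α * Fintype.card V)
    (hne : H ≠ 0)
    (hunif : ∀ S ∈ H, S.card = r)
    (hspread : ∀ A : Finset V,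
      0 < (H.filter (fun S => A ⊆ S)).card →
      1 ≤ A.card → A.card ≤ r → ∀ j : ℕ, 1 ≤ j →
        ((H.filter (fun S => j ≤ (A ∩ S).card)).card : ℝ) ≤ q ^ j * H.card) :
    ((((univ : Finset V).powersetCard m).filter (fun W => ∀ S ∈ H, ¬ S ⊆ W)).card : ℝ)
        / ((Fintype.card V).choose m)
      ≤ 4 * q / α + 2 * Real.exp (-(α * Fintype.card V) / 4) := by
  set n := Fintype.card V with hn
  have hRHSpos : 0 < 4 * q / α + 2 * Real.exp (-(α * n) / 4) := by positivity
  obtain ⟨S0, hS0⟩ : ∃ S, S ∈ H := by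
    rcases Multiset.exists_mem_of_ne_zero hne with ⟨S, hS⟩; exact ⟨S, hS⟩
  have hHc : 0 < Multiset.card H := Multiset.card_pos.mpr hne
  have hHcR : (0:ℝ) < (Multiset.card H : ℝ) := by exact_mod_cast hHc
  by_cases hr0 : r = 0
  · -- all edges empty, LHS = 0
    have hS0e : S0 = ∅ := Finset.card_eq_zero.mp (by rw [hunif S0 hS0, hr0])
    have hB : (((univ : Finset V).powersetCard m).filter (fun W => ∀ S ∈ H, ¬ S ⊆ W)) = ∅ := by
      apply Finset.filter_false_of_mem
      intro W _ h
      exact h S0 hS0 (hS0e ▸ Finset.empty_subset W)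
    rw [hB]
    simpa using hRHSpos.le
  -- main case
  have hr1 : 1 ≤ r := by omega
  have hS0r : S0.card = r := hunif S0 hS0
  have hn1 : 1 ≤ n := by
    obtain ⟨v, hv⟩ := Finset.card_pos.mp (by omega : 0 < S0.card)
    exact Fintype.card_pos_iff.mpr ⟨v⟩
  have hnR : (1:ℝ) ≤ (n:ℝ) := by exact_mod_cast hn1
  -- degree bound : r ≤ q n
  have hdeg : (r : ℝ) ≤ q * n := by
    have hkey : ∀ v : V, ((H.filter (fun S => v ∈ S)).card : ℝ)
        ≤ q * (Multiset.card H) := by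
      intro v
      have hfeq : H.filter (fun S => ({v} : Finset V) ⊆ S) = H.filter (fun S => v ∈ S) := by
        apply Multiset.filter_congr
        intro S _
        simp [Finset.singleton_subset_iff]
      have hfeq2 : H.filter (fun S => 1 ≤ (({v} : Finset V) ∩ S).card)
          = H.filter (fun S => v ∈ S) := by
        apply Multiset.filter_congr
        intro S _
        constructor
        · intro h
          obtain ⟨x, hx⟩ := Finset.card_pos.mp h
          simp only [Finset.mem_inter, Finset.mem_singleton] at hx
          exact hx.1 ▸ hx.2
        · intro h
          have : ({v} : Finset V) ∩ S = {v} := by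
            ext x; simp only [Finset.mem_inter, Finset.mem_singleton]
            constructor
            · exact fun hx => hx.1
            · rintro rfl; exact ⟨rfl, h⟩
          rw [this, Finset.card_singleton]
      by_cases hd : 0 < (H.filter (fun S => ({v} : Finset V) ⊆ S)).card
      · have h1 := hspread {v} hd (by simp) (by simpa using hr1) 1 le_rfl
        rw [hfeq2] at h1
        simpa using h1
      · rw [← hfeq]
        push_neg at hd
        interval_cases h : (H.filter (fun S => ({v} : Finset V) ⊆ S)).card
        · simp; positivity
    have hsum : ∑ v ∈ (univ : Finset V), ((H.filter (fun S => v ∈ S)).card : ℝ)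
        = (Multiset.card H) * r := by
      calc ∑ v ∈ (univ : Finset V), ((H.filter (fun S => v ∈ S)).card : ℝ)
          = ∑ v ∈ (univ : Finset V),
              (H.map (fun S => if v ∈ S then (1:ℝ) else 0)).sum :=
            Finset.sum_congr rfl fun v _ => spr_card_filter H _
        _ = (H.map (fun S => ∑ v ∈ (univ : Finset V),
              if v ∈ S then (1:ℝ) else 0)).sum := spr_swap H univ _
        _ = (H.map (fun _ => (r:ℝ))).sum := by
            apply congrArg Multiset.sum
            apply Multiset.map_congr rfl
            intro S hS
            rw [Finset.sum_boole]
            have he : (univ.filter (fun v => v ∈ S)) = S := by ext x; simp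
            rw [he, hunif S hS]
        _ = (Multiset.card H) * r := spr_sum_const H _
    have hub : ∑ v ∈ (univ : Finset V), ((H.filter (fun S => v ∈ S)).card : ℝ)
        ≤ (n : ℝ) * (q * Multiset.card H) := by
      have := Finset.sum_le_card_nsmul (univ : Finset V)
        (fun v => ((H.filter (fun S => v ∈ S)).card : ℝ))
        (q * Multiset.card H) (fun v _ => hkey v)
      rw [Finset.card_univ] at this
      rw [nsmul_eq_mul] at this
      exact this
    rw [hsum] at hub
    nlinarith
  have h4rm : 4 * r ≤ m := by
    have h1 : ((4 * r : ℕ) : ℝ) ≤ (m : ℝ) := by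
      push_cast
      nlinarith
    exact_mod_cast h1
  have hmn : m < n := by
    have h1 : (m : ℝ) < (n : ℝ) := by nlinarith
    exact_mod_cast h1
  have hrm : r ≤ m := by omega
  -- the constant c
  set c : ℝ := 4 / (3 * α) with hc
  have hc1 : 1 ≤ c := by
    rw [hc, le_div_iff₀ (by linarith)]; linarith
  have hc0 : 0 ≤ c := by linarith
  have hcq : c * q ≤ 1/3 := by
    rw [hc, div_mul_eq_mul_div, div_le_iff₀ (by linarith)]; linarith
  have hcq0 : 0 ≤ c * q := by positivity
  -- F
  set F : ℕ → ℝ := fun u => ((n - u).choose (m - u) : ℝ) with hF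
  have hF0 : F 0 = (n.choose m : ℝ) := by simp [hF]
  have hF0pos : 0 < F 0 := by
    rw [hF0]; exact_mod_cast Nat.choose_pos (le_of_lt hmn)
  have hFrpos : 0 < F r := by
    have h' : m - r ≤ n - r := by omega
    have := Nat.choose_pos h'
    simp only [hF]
    exact_mod_cast this
  have hFnn : ∀ u, 0 ≤ F u := fun u => Nat.cast_nonneg _
  -- ratio hypothesis for FB2
  have hcu : ∀ u : ℕ, u < r → ((n:ℝ) - u) ≤ c * ((m:ℝ) - u) := by
    intro u hu
    have hu' : (u:ℝ) + 1 ≤ (r:ℝ) := by exact_mod_cast hu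
    have h4r : 4 * (r:ℝ) ≤ (m:ℝ) := by exact_mod_cast h4rm
    have hu0 : (0:ℝ) ≤ (u:ℝ) := Nat.cast_nonneg u
    have hαu : (0:ℝ) ≤ α * u := mul_nonneg hα0.le hu0
    rw [hc, div_mul_eq_mul_div, le_div_iff₀ (by linarith : (0:ℝ) < 3 * α)]
    nlinarith
  -- pair bound
  have hpair : ∀ S ∈ H, ∀ T ∈ H,
      F ((S ∪ T).card) * F 0 ≤ c ^ ((S ∩ T).card) * (F r * F r) := by
    intro S hS T hT
    set j := (S ∩ T).card with hj
    have hjr : j ≤ r := by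
      rw [hj, ← hunif T hT]
      exact Finset.card_le_card Finset.inter_subset_right
    have hcard : (S ∩ T).card + (S ∪ T).card = S.card + T.card :=
      Finset.card_inter_add_card_union S T
    rw [hunif S hS, hunif T hT] at hcard
    have hcard2 : (S ∪ T).card = r + (r - j) := by omega
    have h1 : F (r + (r - j)) * F 0 ≤ F r * F (r - j) := by
      have h := spr_FB1 n m hmn (r - j) r (by omega)
      simp only [hF, Nat.sub_zero]
      exact h
    have h2 : F (r - j) ≤ c ^ j * F r := by
      have := spr_FB2 n m r c (le_of_lt hmn) hrm hc0 hcu j hjr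
      simpa only [hF] using this
    calc F ((S ∪ T).card) * F 0 = F (r + (r - j)) * F 0 := by rw [hcard2]
      _ ≤ F r * F (r - j) := h1
      _ ≤ F r * (c ^ j * F r) := mul_le_mul_of_nonneg_left h2 (hFnn r)
      _ = c ^ j * (F r * F r) := by ring
  -- spread: M bound
  have hM : ∀ S ∈ H, ∀ i : ℕ, 1 ≤ i →
      ((H.filter (fun T => i ≤ (S ∩ T).card)).card : ℝ)
        ≤ q ^ i * (Multiset.card H) := by
    intro S hS i hi
    have hd : 0 < (H.filter (fun T => S ⊆ T)).card :=
      Multiset.card_pos.mpr (fun h => by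
        have : S ∈ H.filter (fun T => S ⊆ T) :=
          Multiset.mem_filter.mpr ⟨hS, Finset.Subset.refl S⟩
        rw [h] at this
        exact absurd this (Multiset.notMem_zero S))
    have h1S : 1 ≤ S.card := by rw [hunif S hS]; exact hr1
    exact hspread S hd h1S (le_of_eq (hunif S hS)) i hi
  -- Abel bound
  have hgeo : ∑ i ∈ Finset.range r, (c ^ (i+1) - c ^ i) * q ^ (i+1) ≤ 2 * q / α := by
    have he : ∀ i ∈ Finset.range r,
        (c ^ (i+1) - c ^ i) * q ^ (i+1) = ((c - 1) * q) * (c * q) ^ i := by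
      intro i _
      rw [mul_pow]
      ring
    rw [Finset.sum_congr rfl he, ← Finset.mul_sum]
    have hgs := spr_geom (c * q) hcq0 hcq r
    have hcoef : 0 ≤ (c - 1) * q := mul_nonneg (by linarith) hq.le
    have h1 : ((c - 1) * q) * (∑ i ∈ Finset.range r, (c * q) ^ i)
        ≤ ((c - 1) * q) * (3/2) := mul_le_mul_of_nonneg_left hgs hcoef
    have h2 : c * q * (3/2) = 2 * q / α := by
      rw [hc]; field_simp; ring
    nlinarith
  have habel : ∀ S ∈ H,
      (H.map (fun T => c ^ ((S ∩ T).card))).sum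
        ≤ (1 + 2 * q / α) * (Multiset.card H) := by
    intro S hS
    have htel : ∀ T ∈ H, c ^ ((S ∩ T).card)
        = 1 + ∑ i ∈ Finset.range r,
            ((c ^ (i+1) - c ^ i) * (if i + 1 ≤ (S ∩ T).card then (1:ℝ) else 0)) := by
      intro T hT
      set j := (S ∩ T).card with hjdef
      have hj : j ≤ r := by
        rw [hjdef, ← hunif T hT]
        exact Finset.card_le_card Finset.inter_subset_right
      have h1 : ∀ i ∈ Finset.range r,
          (c ^ (i+1) - c ^ i) * (if i + 1 ≤ j then (1:ℝ) else 0)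
            = if i ∈ Finset.range j then c ^ (i+1) - c ^ i else 0 := by
        intro i _
        by_cases h : i + 1 ≤ j
        · simp [h, Finset.mem_range, show i < j by omega]
        · simp [h, Finset.mem_range, show ¬ i < j by omega]
      rw [Finset.sum_congr rfl h1, Finset.sum_ite_mem]
      have hint : Finset.range r ∩ Finset.range j = Finset.range j := by
        rw [Finset.inter_eq_right]
        exact Finset.range_subset_range.mpr hj
      rw [hint, Finset.sum_range_sub (fun i => c ^ i)]
      ring
    have hMi : ∀ i ∈ Finset.range r,
        (H.map (fun T => (c ^ (i+1) - c ^ i)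
          * (if i + 1 ≤ (S ∩ T).card then (1:ℝ) else 0))).sum
        ≤ (c ^ (i+1) - c ^ i) * q ^ (i+1) * (Multiset.card H) := by
      intro i _
      rw [← spr_mul_sum]
      have hcnn : 0 ≤ c ^ (i+1) - c ^ i := by
        have := pow_le_pow_right₀ hc1 (by omega : i ≤ i + 1)
        linarith
      have hm1 : (H.map (fun T => if i + 1 ≤ (S ∩ T).card then (1:ℝ) else 0)).sum
          = ((H.filter (fun T => i + 1 ≤ (S ∩ T).card)).card : ℝ) :=
        (spr_card_filter H _).symm
      rw [hm1, mul_assoc]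
      exact mul_le_mul_of_nonneg_left (hM S hS (i+1) (by omega)) hcnn
    calc (H.map (fun T => c ^ ((S ∩ T).card))).sum
        = (H.map (fun T => 1 + ∑ i ∈ Finset.range r,
            ((c ^ (i+1) - c ^ i) * (if i + 1 ≤ (S ∩ T).card then (1:ℝ) else 0)))).sum :=
          congrArg Multiset.sum (Multiset.map_congr rfl htel)
      _ = (H.map (fun _ => (1:ℝ))).sum
          + (H.map (fun T => ∑ i ∈ Finset.range r,
            ((c ^ (i+1) - c ^ i) * (if i + 1 ≤ (S ∩ T).card then (1:ℝ) else 0)))).sum :=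
          spr_sum_add H _ _
      _ = (Multiset.card H) * 1
          + ∑ i ∈ Finset.range r, (H.map (fun T => (c ^ (i+1) - c ^ i)
            * (if i + 1 ≤ (S ∩ T).card then (1:ℝ) else 0))).sum := by
          rw [spr_sum_const]
          congr 1
          exact (spr_swap H (Finset.range r)
            (fun T i => (c ^ (i+1) - c ^ i)
              * (if i + 1 ≤ (S ∩ T).card then (1:ℝ) else 0))).symm
      _ ≤ (Multiset.card H) * 1
          + ∑ i ∈ Finset.range r, (c ^ (i+1) - c ^ i) * q ^ (i+1) * (Multiset.card H) := by
          have := Finset.sum_le_sum hMi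
          linarith
      _ = (1 + ∑ i ∈ Finset.range r, (c ^ (i+1) - c ^ i) * q ^ (i+1)) * (Multiset.card H) := by
          rw [add_mul, one_mul, Finset.sum_mul, mul_one]
      _ ≤ (1 + 2 * q / α) * (Multiset.card H) := by
          apply mul_le_mul_of_nonneg_right _ hHcR.le
          linarith [hgeo]
  -- sums
  set P := ((univ : Finset V).powersetCard m) with hP
  set X : Finset V → ℝ := fun W => ((H.filter (fun S => S ⊆ W)).card : ℝ) with hX
  have hXnn : ∀ W, 0 ≤ X W := fun W => Nat.cast_nonneg _
  have hcount : ∀ A : Finset V, A.card ≤ m →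
      (∑ W ∈ P, if A ⊆ W then (1:ℝ) else 0) = F A.card := by
    intro A hA
    rw [Finset.sum_boole]
    have h := spr_count A m hA
    rw [← hn] at h
    rw [hP, h]
  have hS1 : ∑ W ∈ P, X W = (Multiset.card H) * F r := by
    calc ∑ W ∈ P, X W
        = ∑ W ∈ P, (H.map (fun S => if S ⊆ W then (1:ℝ) else 0)).sum :=
          Finset.sum_congr rfl fun W _ => spr_card_filter H _
      _ = (H.map (fun S => ∑ W ∈ P, if S ⊆ W then (1:ℝ) else 0)).sum :=
          spr_swap H P _
      _ = (H.map (fun _ => F r)).sum := by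
          apply congrArg Multiset.sum
          apply Multiset.map_congr rfl
          intro S hS
          rw [hcount S (by rw [hunif S hS]; omega), hunif S hS]
      _ = (Multiset.card H) * F r := spr_sum_const H _
  have hS2 : (∑ W ∈ P, (X W)^2) * F 0
      ≤ (1 + 2 * q / α) * ((Multiset.card H) * F r)^2 := by
    have hind : ∀ (S T W : Finset V),
        (if S ⊆ W then (1:ℝ) else 0) * (if T ⊆ W then (1:ℝ) else 0)
          = if S ∪ T ⊆ W then (1:ℝ) else 0 := by
      intro S T W
      by_cases h1 : S ⊆ W <;> by_cases h2 : T ⊆ W <;>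
        simp [h1, h2, Finset.union_subset_iff]
    have hXsq : ∀ W, (X W)^2 = (H.map (fun S =>
        (H.map (fun T => if S ∪ T ⊆ W then (1:ℝ) else 0)).sum)).sum := by
      intro W
      rw [sq, hX]
      simp only
      rw [spr_card_filter H _, spr_sum_mul_sum]
      apply congrArg Multiset.sum
      apply Multiset.map_congr rfl
      intro S _
      apply congrArg Multiset.sum
      apply Multiset.map_congr rfl
      intro T _
      exact hind S T W
    have hs2eq : ∑ W ∈ P, (X W)^2
        = (H.map (fun S => (H.map (fun T => F ((S ∪ T).card))).sum)).sum := by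
      calc ∑ W ∈ P, (X W)^2
          = ∑ W ∈ P, (H.map (fun S =>
              (H.map (fun T => if S ∪ T ⊆ W then (1:ℝ) else 0)).sum)).sum :=
            Finset.sum_congr rfl fun W _ => hXsq W
        _ = (H.map (fun S => ∑ W ∈ P, (H.map (fun T =>
              if S ∪ T ⊆ W then (1:ℝ) else 0)).sum)).sum :=
            spr_swap H P _
        _ = (H.map (fun S => (H.map (fun T => F ((S ∪ T).card))).sum)).sum := by
            apply congrArg Multiset.sum
            apply Multiset.map_congr rfl
            intro S hS
            rw [spr_swap H P (fun T W => if S ∪ T ⊆ W then (1:ℝ) else 0)]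
            apply congrArg Multiset.sum
            apply Multiset.map_congr rfl
            intro T hT
            apply hcount
            calc (S ∪ T).card ≤ S.card + T.card := Finset.card_union_le S T
              _ = r + r := by rw [hunif S hS, hunif T hT]
              _ ≤ m := by omega
    rw [hs2eq, mul_comm, spr_mul_sum]
    have hstep1 : ∀ S ∈ H,
        F 0 * (H.map (fun T => F ((S ∪ T).card))).sum
          ≤ (F r * F r) * ((1 + 2 * q / α) * (Multiset.card H)) := by
      intro S hS
      rw [spr_mul_sum]
      calc (H.map (fun T => F 0 * F ((S ∪ T).card))).sum
          ≤ (H.map (fun T => (F r * F r) * c ^ ((S ∩ T).card))).sum := by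
            apply spr_sum_le_sum
            intro T hT
            have := hpair S hS T hT
            linarith [this]
        _ = (F r * F r) * (H.map (fun T => c ^ ((S ∩ T).card))).sum :=
            (spr_mul_sum H _ _).symm
        _ ≤ (F r * F r) * ((1 + 2 * q / α) * (Multiset.card H)) :=
            mul_le_mul_of_nonneg_left (habel S hS) (mul_nonneg (hFnn r) (hFnn r))
    calc (H.map (fun S => F 0 * (H.map (fun T => F ((S ∪ T).card))).sum)).sum
        ≤ (H.map (fun _ => (F r * F r) * ((1 + 2 * q / α) * (Multiset.card H)))).sum :=
          spr_sum_le_sum H _ _ hstep1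
      _ = (Multiset.card H) * ((F r * F r) * ((1 + 2 * q / α) * (Multiset.card H))) :=
          spr_sum_const H _
      _ = (1 + 2 * q / α) * ((Multiset.card H) * F r)^2 := by ring
  -- Cauchy-Schwarz conclusion
  set B := P.filter (fun W => ∀ S ∈ H, ¬ S ⊆ W) with hB
  set G := P.filter (fun W => ¬ ∀ S ∈ H, ¬ S ⊆ W) with hGdef
  have hXzero : ∀ W, (∀ S ∈ H, ¬ S ⊆ W) → X W = 0 := by
    intro W hW
    rw [hX]
    simp only
    norm_cast
    rw [Multiset.card_eq_zero, Multiset.filter_eq_nil]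
    exact hW
  have hcardBG : (B.card : ℝ) + G.card = F 0 := by
    rw [hF0]
    have h1 : B.card + G.card = P.card :=
      Finset.card_filter_add_card_filter_not _
    have h2 : P.card = n.choose m := by
      rw [hP, Finset.card_powersetCard, Finset.card_univ]
    rw [← h2]
    exact_mod_cast h1
  have hsumG : ∑ W ∈ G, X W = (Multiset.card H) * F r := by
    rw [← hS1]
    apply Finset.sum_subset (Finset.filter_subset _ _)
    intro W hW hWG
    apply hXzero
    by_contra h
    exact hWG (Finset.mem_filter.mpr ⟨hW, h⟩)
  have hCS : (∑ W ∈ G, X W)^2 ≤ (G.card : ℝ) * ∑ W ∈ G, (X W)^2 :=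
    sq_sum_le_card_mul_sum_sq
  have hG2 : ∑ W ∈ G, (X W)^2 ≤ ∑ W ∈ P, (X W)^2 :=
    Finset.sum_le_sum_of_subset_of_nonneg (Finset.filter_subset _ _)
      (fun i _ _ => sq_nonneg _)
  have hS1pos : 0 < (Multiset.card H : ℝ) * F r := mul_pos hHcR hFrpos
  have hGnn : (0:ℝ) ≤ (G.card : ℝ) := Nat.cast_nonneg _
  have hkey : F 0 ≤ (G.card : ℝ) * (1 + 2 * q / α) := by
    have h1 : ((Multiset.card H) * F r)^2 * F 0
        ≤ ((G.card : ℝ) * (1 + 2 * q / α)) * ((Multiset.card H) * F r)^2 := by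
      calc ((Multiset.card H) * F r)^2 * F 0
          = (∑ W ∈ G, X W)^2 * F 0 := by rw [hsumG]
        _ ≤ ((G.card : ℝ) * ∑ W ∈ G, (X W)^2) * F 0 :=
            mul_le_mul_of_nonneg_right hCS hF0pos.le
        _ ≤ ((G.card : ℝ) * ∑ W ∈ P, (X W)^2) * F 0 := by
            apply mul_le_mul_of_nonneg_right _ hF0pos.le
            exact mul_le_mul_of_nonneg_left hG2 hGnn
        _ = (G.card : ℝ) * ((∑ W ∈ P, (X W)^2) * F 0) := by ring
        _ ≤ (G.card : ℝ) * ((1 + 2 * q / α) * ((Multiset.card H) * F r)^2) :=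
            mul_le_mul_of_nonneg_left hS2 hGnn
        _ = ((G.card : ℝ) * (1 + 2 * q / α)) * ((Multiset.card H) * F r)^2 := by ring
    have h2 : F 0 * ((Multiset.card H) * F r)^2
        ≤ ((G.card : ℝ) * (1 + 2 * q / α)) * ((Multiset.card H) * F r)^2 := by
      linarith [h1, sq_nonneg ((Multiset.card H : ℝ) * F r)]
    exact le_of_mul_le_mul_right (by linarith [h2]) (pow_pos hS1pos 2)
  have hεnn : (0:ℝ) ≤ 2 * q / α := by positivity
  have hBnn : (0:ℝ) ≤ (B.card : ℝ) := Nat.cast_nonneg _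
  have hBbound : (B.card : ℝ) ≤ (2 * q / α) * F 0 := by
    nlinarith [hkey, hcardBG, hεnn, hBnn]
  have hfinal : (B.card : ℝ) / F 0 ≤ 2 * q / α := by
    rw [div_le_iff₀ hF0pos]
    linarith [hBbound]
  rw [hF0] at hfinal
  have h24 : 2 * q / α ≤ 4 * q / α := (div_le_div_iff_of_pos_right hα0).mpr (by linarith)
  have hexp : 0 < Real.exp (-(α * (n:ℝ)) / 4) := Real.exp_pos _
  linarith [hfinal, h24, hexp]
end

section
/- Let H be an r-uniform hypergraph on an n-vertex set V that is (q; r, k)-spread, and suppose m_j(S) ≤ q^j |H| for all edges S and j ≥ k. Fix an edge S ∈ H, reals C ≥ 4, p = Cq with p ≤ 1/2 and pn ≥ 2r, an integer t ≤ r, and set w = pn − t. If W' is a uniformly random w-subset of V \ S, then the expected number of edges S' of H with S' ⊆ S ∪ W' and |S' ∩ S| ≥ k is at most 2 (C/2)^{-k} |H| C(w+r, r) / C(n, r). -/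
/-!
Averaging over `W'` is double counting: an edge `S'` meeting `S` in `j` vertices lies in
`S ∪ W'` for exactly `C(n - 2r + j, w - r + j)` of the `w`-subsets `W'` of `V \ S`. Grouping the
edges by `j` and using `m_j(S) ≤ q^j |H|`, each `j` contributes at most
`|H| q^j C(n - 2r + j, w - r + j) / C(n - r, w)`, and comparing the binomials factor by factor
bounds this by `|H| (q (n - r) / w)^j C(w + r, r) / C(n, r) ≤ |H| (2/C)^j C(w + r, r) / C(n, r)`.
The geometric series `∑_{j ≥ k} (2/C)^j` is at most `2 (2/C)^k` because `C ≥ 4`.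
-/

open Finset

namespace Multiset

variable {α β : Type*}

lemma sum_card_filter_eq_sum_map_card_filter (s : Finset β) (H : Multiset α)
    (p : α → β → Prop) [∀ a b, Decidable (p a b)] :
    ∑ b ∈ s, card (H.filter (p · b)) = (H.map fun a => #{b ∈ s | p a b}).sum := by
  induction H using Multiset.induction_on with
  | empty => simp
  | cons a H ih =>
    simp only [filter_cons, card_add, sum_add_distrib, ih, map_cons, sum_cons, Finset.card_filter]
    congr 1
    exact Finset.sum_congr rfl fun b _ => by split_ifs <;> simp

lemma sum_map_comp_eq_sum_card_filter_mul (H : Multiset α) (f : α → ℕ) (g : ℕ → ℕ)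
    {t : Finset ℕ} (hf : ∀ a ∈ H, f a ∉ t → g (f a) = 0) :
    (H.map fun a => g (f a)).sum = ∑ j ∈ t, card (H.filter (f · = j)) * g j := by
  induction H using Multiset.induction_on with
  | empty => simp
  | cons a H ih =>
    simp only [map_cons, sum_cons, filter_cons, card_add, add_mul, sum_add_distrib,
      apply_ite card, card_singleton, card_zero, ite_mul, one_mul, zero_mul, sum_ite_eq]
    rw [ih fun b hb => hf b (mem_cons_of_mem hb)]
    split_ifs with ha
    · rfl
    · rw [hf a (mem_cons_self a H) ha]

end Multiset

namespace Nat

lemma descFactorial_mul_pow_eq_prod {m u r : ℕ} (hu : u ≤ r) :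
    m.descFactorial u * m ^ (r - u) = ∏ i ∈ range r, if i < u then m - i else m := by
  rw [← prod_range_mul_prod_Ico _ hu, descFactorial_eq_prod_range,
    prod_congr rfl fun i hi => if_pos (mem_range.1 hi),
    prod_congr rfl fun i hi => if_neg (not_lt.2 (mem_Ico.1 hi).1), prod_const, card_Ico]

/-- Factor by factor: `(n - i)(w - i) ≤ (w + r - i)(n - r - i)` for `i < u`, and
`(n - i) w ≤ (w + r - i)(n - r)` for `u ≤ i < r`. -/
lemma descFactorial_mul_descFactorial_mul_pow_le {n r w u : ℕ} (hu : u ≤ r) (huw : u ≤ w)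
    (hwn : w + r ≤ n) :
    w.descFactorial u * n.descFactorial r * w ^ (r - u)
      ≤ (n - r).descFactorial u * (w + r).descFactorial r * (n - r) ^ (r - u) := by
  rw [mul_right_comm, descFactorial_mul_pow_eq_prod hu, mul_right_comm,
    descFactorial_mul_pow_eq_prod hu, descFactorial_eq_prod_range, descFactorial_eq_prod_range,
    ← prod_mul_distrib, ← prod_mul_distrib]
  refine prod_le_prod' fun i hi => ?_
  have hir : i < r := mem_range.1 hi
  split_ifs with hiu
  · zify [show i ≤ w by omega, show i ≤ n - r by omega, show r ≤ n by omega, show i ≤ n by omega,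
      show i ≤ w + r by omega]
    nlinarith [mul_nonneg (show (0 : ℤ) ≤ r by positivity) (show (0 : ℤ) ≤ n - r - w by omega)]
  · zify [show i ≤ n by omega, show r ≤ n by omega, show i ≤ w + r by omega]
    nlinarith [mul_nonneg (show (0 : ℤ) ≤ r - i by omega) (show (0 : ℤ) ≤ n - r - w by omega)]

lemma choose_sub_mul_choose_mul_pow_le {n r w u : ℕ} (hu : u ≤ r) (huw : u ≤ w)
    (hwn : w + r ≤ n) :
    (n - r - u).choose (w - u) * n.choose r * w ^ (r - u)
      ≤ (n - r).choose w * (w + r).choose r * (n - r) ^ (r - u) := by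
  set X := (n - r - u).descFactorial (w - u) with hXdef
  have hX : (n - r - u).choose (w - u) * (w - u)! = X := by
    rw [hXdef, descFactorial_eq_factorial_mul_choose, mul_comm]
  have hw : w ! = (w - u)! * w.descFactorial u := (factorial_mul_descFactorial huw).symm
  have hnrw : (n - r).choose w * w ! = X * (n - r).descFactorial u := by
    rw [descFactorial_mul_descFactorial huw, descFactorial_eq_factorial_mul_choose, mul_comm]
  have hchoose (m : ℕ) : m.choose r * r ! = m.descFactorial r := by
    rw [descFactorial_eq_factorial_mul_choose, mul_comm]
  refine Nat.le_of_mul_le_mul_right ?_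
    (Nat.mul_pos (w - u).factorial_pos (Nat.mul_pos r.factorial_pos w.factorial_pos))
  calc (n - r - u).choose (w - u) * n.choose r * w ^ (r - u) * ((w - u)! * (r ! * w !))
      = ((n - r - u).choose (w - u) * (w - u)!) * (n.choose r * r !) * w ^ (r - u) * w ! := by
        ring
    _ = (X * (w - u)!) * (w.descFactorial u * n.descFactorial r * w ^ (r - u)) := by
        rw [hX, hchoose, hw]; ring
    _ ≤ (X * (w - u)!) * ((n - r).descFactorial u * (w + r).descFactorial r * (n - r) ^ (r - u)) :=
        Nat.mul_le_mul_left _ (descFactorial_mul_descFactorial_mul_pow_le hu huw hwn)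
    _ = ((n - r).choose w * w !) * ((w + r).choose r * r !) * (n - r) ^ (r - u) * (w - u)! := by
        rw [hnrw, hchoose]; ring
    _ = (n - r).choose w * (w + r).choose r * (n - r) ^ (r - u) * ((w - u)! * (r ! * w !)) := by
        ring

end Nat

lemma pow_mul_choose_le_pow_mul {n r w j : ℕ} {q c : ℝ} (hq : 0 ≤ q) (hj : j ≤ r) (hrw : r ≤ w)
    (hwn : w + r ≤ n) (hqc : q * (n - r : ℕ) ≤ c * w) :
    q ^ j * (n - r - (r - j)).choose (w - (r - j))
      ≤ c ^ j * ((w + r).choose r * (n - r).choose w / n.choose r) := by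
  have hkey : ((n - r - (r - j)).choose (w - (r - j)) * n.choose r * w ^ j : ℝ)
      ≤ (n - r).choose w * (w + r).choose r * (n - r : ℕ) ^ j := by
    have := Nat.choose_sub_mul_choose_mul_pow_le (n := n) (u := r - j) (by omega) (by omega) hwn
    rw [Nat.sub_sub_self hj] at this
    exact_mod_cast this
  have hwj : (0 : ℝ) < (w : ℝ) ^ j := by
    rcases Nat.eq_zero_or_pos j with rfl | hj0
    · simp
    · exact pow_pos (by exact_mod_cast (show 0 < w by omega)) j
  rw [mul_div_assoc', le_div_iff₀ (by exact_mod_cast Nat.choose_pos (by omega))]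
  refine le_of_mul_le_mul_right ?_ hwj
  calc q ^ j * (n - r - (r - j)).choose (w - (r - j)) * n.choose r * (w : ℝ) ^ j
      = q ^ j * ((n - r - (r - j)).choose (w - (r - j)) * n.choose r * w ^ j) := by ring
    _ ≤ q ^ j * ((n - r).choose w * (w + r).choose r * (n - r : ℕ) ^ j) := by gcongr
    _ = (n - r).choose w * (w + r).choose r * (q * (n - r : ℕ)) ^ j := by ring
    _ ≤ (n - r).choose w * (w + r).choose r * (c * w) ^ j := by gcongr
    _ = c ^ j * ((w + r).choose r * (n - r).choose w) * (w : ℝ) ^ j := by ring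

lemma sum_Icc_pow_le_two_mul_pow {c : ℝ} (hc0 : 0 ≤ c) (hc : c ≤ 1 / 2) (k r : ℕ) :
    ∑ j ∈ Icc k r, c ^ j ≤ 2 * c ^ k := by
  calc ∑ j ∈ Icc k r, c ^ j = ∑ j ∈ Ico k (r + 1), c ^ j := by rw [Ico_add_one_right_eq_Icc]
    _ ≤ c ^ k / (1 - c) := geom_sum_Ico_le_of_lt_one hc0 (by linarith)
    _ ≤ 2 * c ^ k := by
        rw [div_le_iff₀ (by linarith)]
        nlinarith [pow_nonneg hc0 k]

section Hypergraph

variable {V : Type*} [DecidableEq V] [Fintype V]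

lemma card_filter_powersetCard_subset_union {U S S' : Finset V} {w : ℕ} (hU : S' \ S ⊆ U)
    (hw : #(S' \ S) ≤ w) :
    #{W ∈ U.powersetCard w | S' ⊆ S ∪ W} = (#U - #(S' \ S)).choose (w - #(S' \ S)) := by
  have hsub : ∀ W : Finset V, S' ⊆ S ∪ W ↔ S' \ S ⊆ W := fun _ => sdiff_le_iff.symm
  simp_rw [hsub]
  exact card_filter_powersetCard_subset _ _ _ hU hw

lemma sum_card_filter_subset_union_eq (H : Multiset (Finset V)) (S : Finset V) {r k w : ℕ}
    (hrw : r ≤ w) (hunif : ∀ S' ∈ H, #S' = r) :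
    ∑ W ∈ (univ \ S).powersetCard w, Multiset.card (H.filter fun S' => S' ⊆ S ∪ W ∧ k ≤ #(S' ∩ S))
      = ∑ j ∈ Icc k r, Multiset.card (H.filter fun T => #(S ∩ T) = j)
          * (Fintype.card V - #S - (r - j)).choose (w - (r - j)) := by
  set φ : ℕ → ℕ := fun j => if k ≤ j then (Fintype.card V - #S - (r - j)).choose (w - (r - j))
    else 0
  have hedge : ∀ S' ∈ H,
      #{W ∈ (univ \ S).powersetCard w | S' ⊆ S ∪ W ∧ k ≤ #(S' ∩ S)} = φ #(S ∩ S') := by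
    intro S' hS'
    have hsdiff : #(S' \ S) = r - #(S ∩ S') := by
      have := card_sdiff_add_card_inter S' S
      rw [inter_comm, hunif S' hS'] at this
      omega
    rw [inter_comm S' S]
    by_cases hk : k ≤ #(S ∩ S')
    · simp only [hk, and_true, φ, if_true]
      rw [card_filter_powersetCard_subset_union (sdiff_subset_sdiff (subset_univ _) le_rfl)
        (by omega), card_univ_sdiff, hsdiff]
    · simp [hk, φ]
  rw [Multiset.sum_card_filter_eq_sum_map_card_filter, Multiset.map_congr rfl hedge,
    Multiset.sum_map_comp_eq_sum_card_filter_mul (t := Icc k r)]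
  · exact sum_congr rfl fun j hj => by simp [φ, (mem_Icc.1 hj).1]
  · intro S' hS' hj
    simp only [φ, ite_eq_right_iff]
    exact fun hk => absurd (mem_Icc.2 ⟨hk, hunif S' hS' ▸ card_le_card inter_subset_right⟩) hj

theorem sum_card_filter_subset_union_le (H : Multiset (Finset V)) (S : Finset V) {r k w : ℕ}
    {q c : ℝ} (hq : 0 ≤ q) (hc0 : 0 ≤ c) (hc : c ≤ 1 / 2) (hrw : r ≤ w)
    (hwn : w + r ≤ Fintype.card V) (hqc : q * (Fintype.card V - r : ℕ) ≤ c * w)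
    (hunif : ∀ S' ∈ H, #S' = r) (hSr : #S = r)
    (hm : ∀ j, k ≤ j → (Multiset.card (H.filter fun T => #(S ∩ T) = j) : ℝ) ≤ q ^ j * H.card) :
    ∑ W ∈ (univ \ S).powersetCard w,
        (Multiset.card (H.filter fun S' => S' ⊆ S ∪ W ∧ k ≤ #(S' ∩ S)) : ℝ)
      ≤ 2 * c ^ k * H.card * ((w + r).choose r * (Fintype.card V - r).choose w
          / (Fintype.card V).choose r) := by
  set n := Fintype.card V
  set B : ℝ := (w + r).choose r * (n - r).choose w / n.choose r
  rw [← Nat.cast_sum, sum_card_filter_subset_union_eq H S hrw hunif, hSr]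
  push_cast
  calc ∑ j ∈ Icc k r, (Multiset.card (H.filter fun T => #(S ∩ T) = j) : ℝ)
        * (n - r - (r - j)).choose (w - (r - j))
      ≤ ∑ j ∈ Icc k r, H.card * (q ^ j * (n - r - (r - j)).choose (w - (r - j))) := by
        refine sum_le_sum fun j hj => ?_
        rw [← mul_assoc, mul_comm (H.card : ℝ)]
        gcongr
        exact hm j (mem_Icc.1 hj).1
    _ ≤ ∑ j ∈ Icc k r, H.card * (c ^ j * B) := by
        exact sum_le_sum fun j hj => mul_le_mul_of_nonneg_left
          (pow_mul_choose_le_pow_mul hq (mem_Icc.1 hj).2 hrw hwn hqc) H.card.cast_nonneg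
    _ = H.card * B * ∑ j ∈ Icc k r, c ^ j := by
        rw [mul_sum]
        exact sum_congr rfl fun j _ => by ring
    _ ≤ H.card * B * (2 * c ^ k) := by
        gcongr
        exact sum_Icc_pow_le_two_mul_pow hc0 hc k r
    _ = 2 * c ^ k * H.card * B := by ring

end Hypergraph

theorem stmt18_general {V : Type*} [DecidableEq V] [Fintype V]
    (H : Multiset (Finset V)) (r k n P t w : ℕ) (q C : ℝ) (S : Finset V)
    (hn : n = Fintype.card V) (hq : 0 < q) (hC : 4 ≤ C)
    (hp : C * q ≤ 1/2) (hPn : (P : ℝ) = C * q * n) (hP2r : 2 * r ≤ P)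
    (ht : t ≤ r) (hw : w = P - t)
    (hunif : ∀ S' ∈ H, S'.card = r) (hS : S ∈ H)
    (hm : ∀ S' ∈ H, ∀ j, k ≤ j →
      ((H.filter (fun T => (S' ∩ T).card = j)).card : ℝ) ≤ q ^ j * H.card) :
    (∑ W' ∈ ((univ : Finset V) \ S).powersetCard w,
        ((H.filter (fun S' => S' ⊆ S ∪ W' ∧ k ≤ (S' ∩ S).card)).card : ℝ))
        / ((n - r).choose w)
      ≤ 2 * (C/2) ^ (-(k : ℤ)) * H.card * ((w + r).choose r) / (n.choose r) := by
  subst hn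
  have h2P : 2 * P ≤ Fintype.card V := by
    have : (2 * P : ℝ) ≤ Fintype.card V := by
      rw [hPn]; nlinarith [(Fintype.card V).cast_nonneg (α := ℝ)]
    exact_mod_cast this
  have hqc : q * (Fintype.card V - r : ℕ) ≤ 2 / C * w := by
    have hP2w : (P : ℝ) ≤ 2 * w := by exact_mod_cast (show P ≤ 2 * w by omega)
    calc q * ((Fintype.card V - r : ℕ) : ℝ) ≤ q * Fintype.card V := by
          gcongr; exact_mod_cast Nat.sub_le _ r
      _ = P / C := by rw [hPn]; field_simp
      _ ≤ 2 / C * w := by rw [div_mul_eq_mul_div]; gcongr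
  have hbound := sum_card_filter_subset_union_le H S hq.le (by positivity)
    (by rw [div_le_iff₀ (by linarith)]; linarith) (by omega) (by omega) hqc hunif (hunif S hS)
    (hm S hS)
  rw [div_le_iff₀ (by exact_mod_cast Nat.choose_pos (by omega)), zpow_neg, zpow_natCast,
    ← inv_pow, inv_div]
  exact hbound.trans_eq (by ring)

theorem stmt18 {V : Type*} [DecidableEq V] [Fintype V]
    (H : Multiset (Finset V)) (r k n P t w : ℕ) (q C : ℝ) (S : Finset V)
    (hn : n = Fintype.card V) (hq : 0 < q) (hC : 4 ≤ C)
    (hp : C * q ≤ 1/2) (hPn : (P : ℝ) = C * q * n) (hP2r : 2 * r ≤ P)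
    (hk : 1 ≤ k) (hkr : k ≤ r) (ht : t ≤ r) (hw : w = P - t)
    (hne : H ≠ 0) (hunif : ∀ S' ∈ H, S'.card = r) (hS : S ∈ H)
    (hM : ∀ S' ∈ H, ∀ j, k ≤ j →
      ((H.filter (fun T => j ≤ (S' ∩ T).card)).card : ℝ) ≤ q ^ j * H.card)
    (hm : ∀ S' ∈ H, ∀ j, k ≤ j →
      ((H.filter (fun T => (S' ∩ T).card = j)).card : ℝ) ≤ q ^ j * H.card) :
    (∑ W' ∈ ((univ : Finset V) \ S).powersetCard w,
        ((H.filter (fun S' => S' ⊆ S ∪ W' ∧ k ≤ (S' ∩ S).card)).card : ℝ))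
        / ((n - r).choose w)
      ≤ 2 * (C/2) ^ (-(k : ℤ)) * H.card * ((w + r).choose r) / (n.choose r) :=
  stmt18_general H r k n P t w q C S hn hq hC hp hPn hP2r ht hw hunif hS hm
end

section
/- Let H be an r-uniform hypergraph on an n-vertex set V which is (q; r, k)-spread, let C ≥ 4 and p = Cq with pn ≥ 2r, p ≤ 1/2, and pn an integer. Call a pair (S, W) with S ∈ H and W a pn-subset of V k-bad if there is no edge S' ∈ H with S' ⊆ S ∪ W and |S' \ W| ≤ k. Then the number of k-bad pairs is at most 3 (C/2)^{-k/2} |H| C(n, pn). -/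
open Finset

/-!
Fix an edge `S`. For a bad `P`-set `W` choose an edge `Z ⊆ S ∪ W` minimising `t = |Z \ W|`;
badness means `k < t`, and `t ≤ |S| = r`. The set `T = Z \ W` is a `t`-subset of `S`, and by
minimality it is also contained in the edge `Z_U` fixed once and for all inside `U = W ∪ Z`,
so `W ↦ (U, T)` is injective and the bad `W` of parameter `t` number at most
`∑_{|U| = P + t} C(|Z_U ∩ S|, t)`. Summed over `S`, the hockey-stick identity
`C(m, t) = ∑_{t-1 ≤ i < m} C(i, t-1)` rewrites `∑_S C(|Z_U ∩ S|, t)` as a weighted sum of the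
counts `M_j(Z_U)`, `j ≥ t > k`, which spreadness bounds by `(2q)^t |H|`. Finally
`C(n, P + t) ≤ ((1-p)/p)^t C(n, P)` because `P = pn`, so the term of parameter `t` is at most
`(2/C)^t |H| C(n, P)`, and the geometric series over `t > k` is at most `(2/C)^k ≤ (C/2)^(-k/2)`.
-/

theorem Multiset.sum_map_finset_sum_comm {α β M : Type*} [AddCommMonoid M] (H : Multiset α)
    (F : Finset β) (f : α → β → M) :
    (H.map fun a => ∑ b ∈ F, f a b).sum = ∑ b ∈ F, (H.map fun a => f a b).sum :=
  Multiset.sum_map_sum_map _ _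

theorem Multiset.sum_mul_card_filter_comm {α β R : Type*} [Semiring R] (H : Multiset α)
    (F : Finset β) (w : β → R) (p : α → β → Prop) [∀ a b, Decidable (p a b)] :
    ∑ b ∈ F, w b * (H.filter (p · b)).card = (H.map fun a => ∑ b ∈ F with p a b, w b).sum := by
  induction H using Multiset.induction_on with
  | empty => simp
  | cons a H ih =>
    simp only [Multiset.filter_cons, Multiset.card_add, apply_ite Multiset.card,
      Multiset.card_singleton, Multiset.card_zero, Nat.cast_add, apply_ite Nat.cast,
      Nat.cast_one, Nat.cast_zero, mul_add, sum_add_distrib, ih, Multiset.map_cons,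
      Multiset.sum_cons, sum_filter, mul_ite, mul_one, mul_zero]

theorem Nat.sum_Ico_choose (u m : ℕ) : ∑ i ∈ Ico u m, i.choose u = m.choose (u + 1) := by
  induction m with
  | zero => simp
  | succ m ih =>
    rcases lt_or_ge m u with h | h
    · rw [Ico_eq_empty (by omega), Nat.choose_eq_zero_of_lt (by omega), sum_empty]
    · rw [sum_Ico_succ_top h, ih, Nat.choose_succ_succ', add_comm]

theorem sum_Ico_pow_le_two_mul_pow {x : ℝ} (hx0 : 0 ≤ x) (hx : x ≤ 1 / 2) (m n : ℕ) :
    ∑ i ∈ Ico m n, x ^ i ≤ 2 * x ^ m := by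
  calc ∑ i ∈ Ico m n, x ^ i ≤ x ^ m / (1 - x) := geom_sum_Ico_le_of_lt_one hx0 (by linarith)
    _ ≤ 2 * x ^ m := by
      rw [div_le_iff₀ (by linarith)]
      nlinarith [pow_nonneg hx0 m]

theorem Nat.choose_succ_le_mul_choose {n m : ℕ} {p : ℝ} (hp0 : 0 < p) (hp1 : p ≤ 1)
    (hm : p * n ≤ m) : (n.choose (m + 1) : ℝ) ≤ (1 - p) / p * n.choose m := by
  have hrec : (n.choose (m + 1) : ℝ) * (m + 1) = n.choose m * ((n - m : ℕ) : ℝ) := by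
    exact_mod_cast Nat.choose_succ_right_eq n m
  have hsub : p * ((n - m : ℕ) : ℝ) ≤ (1 - p) * (m + 1) := by
    rcases le_total n m with h | h
    · rw [Nat.sub_eq_zero_of_le h, Nat.cast_zero, mul_zero]
      positivity
    · rw [Nat.cast_sub h]
      nlinarith
  rw [div_mul_eq_mul_div, le_div_iff₀ hp0]
  refine le_of_mul_le_mul_right ?_ (by positivity : (0 : ℝ) < m + 1)
  calc (n.choose (m + 1) : ℝ) * p * (m + 1) = n.choose m * (p * ((n - m : ℕ) : ℝ)) := by
        rw [← mul_assoc, mul_comm _ p, mul_assoc, hrec]; ring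
    _ ≤ n.choose m * ((1 - p) * (m + 1)) := by gcongr
    _ = (1 - p) * n.choose m * (m + 1) := by ring

theorem Nat.choose_add_le_pow_mul_choose {n P : ℕ} {p : ℝ} (hp0 : 0 < p) (hp1 : p ≤ 1)
    (hP : p * n ≤ P) (t : ℕ) : (n.choose (P + t) : ℝ) ≤ ((1 - p) / p) ^ t * n.choose P := by
  induction t with
  | zero => simp
  | succ t ih =>
    have hstep := Nat.choose_succ_le_mul_choose (n := n) (m := P + t) hp0 hp1
      (hP.trans (by exact_mod_cast Nat.le_add_right P t))
    calc (n.choose (P + (t + 1)) : ℝ) ≤ (1 - p) / p * n.choose (P + t) := hstep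
      _ ≤ (1 - p) / p * (((1 - p) / p) ^ t * n.choose P) := by
        gcongr
      _ = ((1 - p) / p) ^ (t + 1) * n.choose P := by ring

theorem choose_add_mul_two_mul_pow_le {n P : ℕ} {q C : ℝ} (hq : 0 < q) (hC : 0 < C)
    (hCq : C * q ≤ 1) (hP : C * q * n ≤ P) (t : ℕ) :
    (n.choose (P + t) : ℝ) * (2 * q) ^ t ≤ (2 / C) ^ t * n.choose P := by
  have hp0 : 0 < C * q := by positivity
  have hratio : (1 - C * q) / (C * q) * (2 * q) = (1 - C * q) * (2 / C) := by
    field_simp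
  calc (n.choose (P + t) : ℝ) * (2 * q) ^ t
      ≤ ((1 - C * q) / (C * q)) ^ t * n.choose P * (2 * q) ^ t := by
        gcongr
        exact Nat.choose_add_le_pow_mul_choose hp0 hCq hP t
    _ = ((1 - C * q) / (C * q) * (2 * q)) ^ t * n.choose P := by
        rw [mul_pow ((1 - C * q) / (C * q))]; ring
    _ = ((1 - C * q) * (2 / C)) ^ t * n.choose P := by rw [hratio]
    _ ≤ (2 / C) ^ t * n.choose P := by
        have h2C : 0 < 2 / C := by positivity
        gcongr
        nlinarith

theorem sum_map_choose_card_inter_le {V : Type*} [DecidableEq V] (H : Multiset (Finset V))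
    (A : Finset V) {q : ℝ} {t : ℕ} (hq0 : 0 ≤ q) (hq : q ≤ 1 / 4) (ht : 0 < t)
    (hM : ∀ j, t ≤ j → ((H.filter fun S => j ≤ #(A ∩ S)).card : ℝ) ≤ q ^ j * H.card) :
    (H.map fun S => ((#(A ∩ S)).choose t : ℝ)).sum ≤ (2 * q) ^ t * H.card := by
  obtain ⟨u, rfl⟩ := Nat.exists_eq_add_of_lt ht
  simp only [zero_add] at hM ⊢
  calc (H.map fun S => ((#(A ∩ S)).choose (u + 1) : ℝ)).sum
      = ∑ i ∈ Ico u #A, (i.choose u : ℝ) * (H.filter fun S => i + 1 ≤ #(A ∩ S)).card := by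
        rw [Multiset.sum_mul_card_filter_comm]
        refine congrArg _ (Multiset.map_congr rfl fun S _ => ?_)
        have hfilter : {i ∈ Ico u #A | i + 1 ≤ #(A ∩ S)} = Ico u #(A ∩ S) := by
          ext i
          have := card_le_card (inter_subset_left (s₁ := A) (s₂ := S))
          simp only [mem_filter, mem_Ico]
          omega
        rw [hfilter]
        exact_mod_cast (Nat.sum_Ico_choose _ _).symm
    _ ≤ ∑ i ∈ Ico u #A, (2 : ℝ) ^ i * (q ^ (i + 1) * H.card) := by
        gcongr with i hi
        · exact_mod_cast Nat.choose_le_two_pow i u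
        · exact hM (i + 1) (by rw [mem_Ico] at hi; omega)
    _ = q * H.card * ∑ i ∈ Ico u #A, (2 * q) ^ i := by
        rw [mul_sum]; refine sum_congr rfl fun i _ => by ring
    _ ≤ q * H.card * (2 * (2 * q) ^ u) := by
        gcongr
        exact sum_Ico_pow_le_two_mul_pow (by positivity) (by linarith) _ _
    _ = (2 * q) ^ (u + 1) * H.card := by ring

section Hypergraph

variable {V : Type*}

open Classical in
noncomputable def edgeWithin (H : Multiset (Finset V)) (U : Finset V) : Finset V :=
  if h : ∃ Z ∈ H, Z ⊆ U then h.choose else ∅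

theorem edgeWithin_mem_subset {H : Multiset (Finset V)} {U : Finset V} (h : ∃ Z ∈ H, Z ⊆ U) :
    edgeWithin H U ∈ H ∧ edgeWithin H U ⊆ U := by
  rw [edgeWithin, dif_pos h]
  exact h.choose_spec

theorem edgeWithin_eq_empty {H : Multiset (Finset V)} {U : Finset V} (h : ¬∃ Z ∈ H, Z ⊆ U) :
    edgeWithin H U = ∅ := by
  rw [edgeWithin, dif_neg h]

theorem exists_edge_min_card_sdiff [DecidableEq V] {H : Multiset (Finset V)} {U : Finset V}
    (W : Finset V) (h : ∃ Z ∈ H, Z ⊆ U) :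
    ∃ Z ∈ H, Z ⊆ U ∧ ∀ Y ∈ H, Y ⊆ U → #(Z \ W) ≤ #(Y \ W) := by
  obtain ⟨Z, hZ, hZU⟩ := h
  obtain ⟨Y, hY, hmin⟩ := exists_min_image {Z ∈ H.toFinset | Z ⊆ U} (fun Z => #(Z \ W))
    ⟨Z, by simpa using ⟨hZ, hZU⟩⟩
  simp only [mem_filter, Multiset.mem_toFinset] at hY hmin
  exact ⟨Y, hY.1, hY.2, fun Y' hY' hY'U => hmin Y' ⟨hY', hY'U⟩⟩

theorem sdiff_subset_edgeWithin_union [DecidableEq V] {H : Multiset (Finset V)}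
    {U W Z : Finset V} (hZ : Z ∈ H) (hZU : Z ⊆ U) (hWU : W ⊆ U)
    (hmin : ∀ Y ∈ H, Y ⊆ U → #(Z \ W) ≤ #(Y \ W)) :
    Z \ W ⊆ edgeWithin H (W ∪ Z) := by
  obtain ⟨hY, hYWZ⟩ := edgeWithin_mem_subset ⟨Z, hZ, subset_union_right (s₁ := W)⟩
  set Y := edgeWithin H (W ∪ Z)
  have hYZ : Y \ W ⊆ Z \ W := by
    intro x hx
    rw [mem_sdiff] at hx ⊢
    exact ⟨(mem_union.1 (hYWZ hx.1)).resolve_left hx.2, hx.2⟩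
  rw [← eq_of_subset_of_card_le hYZ (hmin Y hY (hYWZ.trans (union_subset hWU hZU)))]
  exact sdiff_subset

theorem card_bad_le_sum_choose [DecidableEq V] [Fintype V] (H : Multiset (Finset V))
    {S : Finset V} (hS : S ∈ H) {r : ℕ} (hSr : #S ≤ r) (k P : ℕ) :
    #{W ∈ powersetCard P univ | ¬∃ S' ∈ H, S' ⊆ S ∪ W ∧ #(S' \ W) ≤ k}
      ≤ ∑ t ∈ Icc (k + 1) r, ∑ U ∈ powersetCard (P + t) univ, (#(edgeWithin H U ∩ S)).choose t := by
  choose! Z hZ using fun W => exists_edge_min_card_sdiff (U := S ∪ W) W ⟨S, hS, subset_union_left⟩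
  have htarget : ∑ t ∈ Icc (k + 1) r, ∑ U ∈ powersetCard (P + t) univ,
      (#(edgeWithin H U ∩ S)).choose t = #((Icc (k + 1) r).sigma fun t =>
        (powersetCard (P + t) univ).sigma fun U => powersetCard t (edgeWithin H U ∩ S)) := by
    simp only [card_sigma, card_powersetCard]
  rw [htarget]
  refine card_le_card_of_injOn (fun W => ⟨#(Z W \ W), W ∪ Z W, Z W \ W⟩) ?_ ?_
  · intro W hW
    simp only [coe_filter, mem_powersetCard, subset_univ, true_and] at hW
    obtain ⟨hWP, hbad⟩ := hW
    obtain ⟨hZS, hZSW, hmin⟩ := hZ W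
    have hlow : k < #(Z W \ W) := by
      by_contra! h
      exact hbad ⟨Z W, hZS, hZSW, h⟩
    have hup : #(Z W \ W) ≤ #S :=
      (hmin S hS subset_union_left).trans (card_le_card sdiff_subset)
    have hTS : Z W \ W ⊆ S := fun x hx =>
      (mem_union.1 (hZSW (mem_sdiff.1 hx).1)).resolve_right (mem_sdiff.1 hx).2
    simp only [coe_sigma, Set.mem_sigma_iff, coe_Icc, Set.mem_Icc, mem_coe, mem_powersetCard,
      subset_univ, true_and]
    refine ⟨⟨hlow, hup.trans hSr⟩, ?_, subset_inter ?_ hTS, trivial⟩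
    · rw [← union_sdiff_self_eq_union, card_union_of_disjoint disjoint_sdiff, hWP]
    · exact sdiff_subset_edgeWithin_union hZS hZSW subset_union_right hmin
  · intro W₁ _ W₂ _ h
    simp only [Sigma.mk.injEq, heq_eq_eq] at h
    obtain ⟨-, hU, hT⟩ := h
    have hrec : ∀ W, W = (W ∪ Z W) \ (Z W \ W) := fun W => by
      ext x; simp only [mem_sdiff, mem_union]; tauto
    rw [hrec W₁, hrec W₂, hU, hT]

theorem card_filter_le_inter_edgeWithin [DecidableEq V] {H : Multiset (Finset V)} {r k : ℕ}
    {q : ℝ} (hq0 : 0 ≤ q) (hkr : k ≤ r) (hunif : ∀ S ∈ H, #S = r)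
    (hspread : ∀ A : Finset V,
      0 < (H.filter (fun S => A ⊆ S)).card →
      k ≤ A.card → A.card ≤ r → ∀ j, k ≤ j →
        ((H.filter (fun S => j ≤ (A ∩ S).card)).card : ℝ) ≤ q ^ j * H.card)
    (U : Finset V) {j : ℕ} (hj : k < j) :
    ((H.filter fun S => j ≤ #(edgeWithin H U ∩ S)).card : ℝ) ≤ q ^ j * H.card := by
  by_cases h : ∃ Z ∈ H, Z ⊆ U
  · obtain ⟨hA, -⟩ := edgeWithin_mem_subset h
    have hdeg : 0 < (H.filter (edgeWithin H U ⊆ ·)).card :=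
      Multiset.card_pos_iff_exists_mem.2 ⟨_, Multiset.mem_filter.2 ⟨hA, subset_rfl⟩⟩
    exact hspread _ hdeg (hunif _ hA ▸ hkr) (hunif _ hA).le j hj.le
  · rw [edgeWithin_eq_empty h]
    have hj0 : j ≠ 0 := by omega
    simp only [empty_inter, card_empty, nonpos_iff_eq_zero, hj0, Multiset.filter_false,
      Multiset.card_zero, Nat.cast_zero]
    positivity

theorem sum_card_filter_bad_le [DecidableEq V] [Fintype V] (H : Multiset (Finset V))
    (r k P : ℕ) {q : ℝ} (hq0 : 0 ≤ q) (hq : q ≤ 1 / 4) (hunif : ∀ S ∈ H, #S = r)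
    (hspread : ∀ A : Finset V,
      0 < (H.filter (fun S => A ⊆ S)).card →
      k ≤ A.card → A.card ≤ r → ∀ j, k ≤ j →
        ((H.filter (fun S => j ≤ (A ∩ S).card)).card : ℝ) ≤ q ^ j * H.card) :
    ∑ W ∈ powersetCard P univ,
        ((H.filter fun S => ¬∃ S' ∈ H, S' ⊆ S ∪ W ∧ #(S' \ W) ≤ k).card : ℝ)
      ≤ ∑ t ∈ Icc (k + 1) r, ((Fintype.card V).choose (P + t) : ℝ) * ((2 * q) ^ t * H.card) := by
  calc ∑ W ∈ powersetCard P univ,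
        ((H.filter fun S => ¬∃ S' ∈ H, S' ⊆ S ∪ W ∧ #(S' \ W) ≤ k).card : ℝ)
      = (H.map fun S =>
          (#{W ∈ powersetCard P univ | ¬∃ S' ∈ H, S' ⊆ S ∪ W ∧ #(S' \ W) ≤ k} : ℝ)).sum := by
        simpa using Multiset.sum_mul_card_filter_comm H _ (fun _ => (1 : ℝ))
          (fun S W => ¬∃ S' ∈ H, S' ⊆ S ∪ W ∧ #(S' \ W) ≤ k)
    _ ≤ (H.map fun S => ∑ t ∈ Icc (k + 1) r, ∑ U ∈ powersetCard (P + t) univ,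
          ((#(edgeWithin H U ∩ S)).choose t : ℝ)).sum := by
        refine Multiset.sum_map_le_sum_map _ _ fun S hS => ?_
        exact_mod_cast card_bad_le_sum_choose H hS (hunif S hS).le k P
    _ = ∑ t ∈ Icc (k + 1) r, ∑ U ∈ powersetCard (P + t) univ,
          (H.map fun S => ((#(edgeWithin H U ∩ S)).choose t : ℝ)).sum := by
        simp only [Multiset.sum_map_finset_sum_comm]
    _ ≤ ∑ t ∈ Icc (k + 1) r, ∑ U ∈ powersetCard (P + t) univ, (2 * q) ^ t * H.card := by
        gcongr with t ht U
        have hkt : k < t := (mem_Icc.1 ht).1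
        refine sum_map_choose_card_inter_le H _ hq0 hq (by omega) fun j hj => ?_
        exact card_filter_le_inter_edgeWithin hq0 (hkt.le.trans (mem_Icc.1 ht).2) hunif
          hspread U (hkt.trans_le hj)
    _ = ∑ t ∈ Icc (k + 1) r, ((Fintype.card V).choose (P + t) : ℝ) * ((2 * q) ^ t * H.card) := by
        simp only [sum_const, card_powersetCard, card_univ, nsmul_eq_mul]

end Hypergraph

theorem sum_Icc_two_div_pow_le {C : ℝ} (hC : 4 ≤ C) (k r : ℕ) :
    ∑ t ∈ Icc (k + 1) r, (2 / C) ^ t ≤ 3 * (C / 2) ^ (-(k : ℝ) / 2) := by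
  have hx0 : 0 ≤ 2 / C := by positivity
  have hx : 2 / C ≤ 1 / 2 := by rw [div_le_iff₀ (by linarith)]; linarith
  have hpow : (2 / C) ^ k ≤ (C / 2) ^ (-(k : ℝ) / 2) := by
    rw [← inv_div, inv_pow, ← Real.rpow_natCast, ← Real.rpow_neg (by positivity)]
    exact Real.rpow_le_rpow_of_exponent_le (by linarith)
      (by linarith [(k.cast_nonneg : (0 : ℝ) ≤ k)])
  calc ∑ t ∈ Icc (k + 1) r, (2 / C) ^ t = ∑ t ∈ Ico (k + 1) (r + 1), (2 / C) ^ t := by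
        rw [Ico_add_one_right_eq_Icc]
    _ ≤ 2 * (2 / C) ^ (k + 1) := sum_Ico_pow_le_two_mul_pow hx0 hx _ _
    _ ≤ (2 / C) ^ k := by rw [pow_succ]; nlinarith [pow_nonneg hx0 k]
    _ ≤ (C / 2) ^ (-(k : ℝ) / 2) := hpow
    _ ≤ 3 * (C / 2) ^ (-(k : ℝ) / 2) := by
        linarith [Real.rpow_nonneg (by linarith : (0 : ℝ) ≤ C / 2) (-(k : ℝ) / 2)]

theorem stmt19_general {V : Type*} [DecidableEq V] [Fintype V]
    (H : Multiset (Finset V)) (r k n P : ℕ) (q C : ℝ)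
    (hn : n = Fintype.card V) (hq : 0 < q) (hC : 4 ≤ C)
    (hp : C * q ≤ 1/2) (hPn : (P : ℝ) = C * q * n)
    (hunif : ∀ S ∈ H, S.card = r)
    (hspread : ∀ A : Finset V,
      0 < (H.filter (fun S => A ⊆ S)).card →
      k ≤ A.card → A.card ≤ r → ∀ j, k ≤ j →
        ((H.filter (fun S => j ≤ (A ∩ S).card)).card : ℝ) ≤ q ^ j * H.card) :
    (∑ W ∈ (univ : Finset V).powersetCard P,
        ((H.filter (fun S => ¬ ∃ S' ∈ H, S' ⊆ S ∪ W ∧ (S' \ W).card ≤ k)).card : ℝ))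
      ≤ 3 * (C/2) ^ (-(k : ℝ)/2) * H.card * (n.choose P) := by
  subst hn
  calc _ ≤ ∑ t ∈ Icc (k + 1) r, ((Fintype.card V).choose (P + t) : ℝ) * ((2 * q) ^ t * H.card) :=
        sum_card_filter_bad_le H r k P hq.le (by nlinarith) hunif hspread
    _ ≤ ∑ t ∈ Icc (k + 1) r, (2 / C) ^ t * ((Fintype.card V).choose P * H.card) := by
        refine sum_le_sum fun t _ => ?_
        rw [← mul_assoc, ← mul_assoc]
        exact mul_le_mul_of_nonneg_right
          (choose_add_mul_two_mul_pow_le hq (by linarith) (by linarith) hPn.ge t) (by positivity)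
    _ ≤ 3 * (C / 2) ^ (-(k : ℝ) / 2) * ((Fintype.card V).choose P * H.card) := by
        rw [← sum_mul]
        gcongr
        exact sum_Icc_two_div_pow_le hC k r
    _ = _ := by ring

theorem stmt19 {V : Type*} [DecidableEq V] [Fintype V]
    (H : Multiset (Finset V)) (r k n P : ℕ) (q C : ℝ)
    (hn : n = Fintype.card V) (hq : 0 < q) (hC : 4 ≤ C)
    (hp : C * q ≤ 1/2) (hPn : (P : ℝ) = C * q * n) (hP2r : 2 * r ≤ P)
    (hk : 1 ≤ k) (hkr : k ≤ r)
    (hne : H ≠ 0) (hunif : ∀ S ∈ H, S.card = r)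
    (hspread : ∀ A : Finset V,
      0 < (H.filter (fun S => A ⊆ S)).card →
      k ≤ A.card → A.card ≤ r → ∀ j, k ≤ j →
        ((H.filter (fun S => j ≤ (A ∩ S).card)).card : ℝ) ≤ q ^ j * H.card) :
    (∑ W ∈ (univ : Finset V).powersetCard P,
        ((H.filter (fun S => ¬ ∃ S' ∈ H, S' ⊆ S ∪ W ∧ (S' \ W).card ≤ k)).card : ℝ))
      ≤ 3 * (C/2) ^ (-(k : ℝ)/2) * H.card * (n.choose P) :=
  stmt19_general H r k n P q C hn hq hC hp hPn hunif hspread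
end
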